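/- arXiv:1904.00934 — 4 statements merged into one kernel-verified Lean document; each statement's English description precedes it below -/
import Mathlib

section
/- Fix k ≥ 1. Let D be a database and ā an n-ary tuple of elements of D (n ≥ 0). For each c ≥ 1 there exists a CQ q_c(x̄_c) in GHW(k) such that for every database D' and every n-tuple b̄ of elements of D': b̄ ∈ q_c(D') iff (q_c, x̄_c) → (D', b̄) iff (D, ā) →_k^c (D', b̄). -/
/-!
Common formalization of relational databases, conjunctive queries (CQs),
generalized hypertreewidth, existential cover (pebble) games, and
approximations of CQs, following Barceló, Romero, Zeume,
"A More General Theory of Static Approximations for Conjunctive Queries".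
-/

/-- A relational schema: a finite set of relation symbols, each with an arity. -/
structure Schema where
  Rel : Type
  rel_finite : Finite Rel
  arity : Rel → ℕ

/-- A fact (atom) over schema `σ`, with arguments (constants/variables) from `α`. -/
structure Atom (σ : Schema) (α : Type) where
  rel : σ.Rel
  args : Fin (σ.arity rel) → α

/-- A database instance over `σ` with elements from `α`: a set of facts.
    (Finiteness or countability is imposed separately where needed.) -/
abbrev DB (σ : Schema) (α : Type) := Set (Atom σ α)

/-- Applying a map on elements to a fact. -/
def Atom.map {σ : Schema} {α β : Type} (h : α → β) (f : Atom σ α) : Atom σ β :=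
  ⟨f.rel, fun i => h (f.args i)⟩

/-- `h` is a homomorphism from `D` to `D'`. -/
def IsHom {σ : Schema} {α β : Type} (h : α → β) (D : DB σ α) (D' : DB σ β) : Prop :=
  ∀ f ∈ D, f.map h ∈ D'

/-- `(D, a) → (D', b)`: there is a homomorphism from `D` to `D'` mapping `a` to `b`. -/
def HomTup {σ : Schema} {α β : Type} {n : ℕ} (D : DB σ α) (a : Fin n → α)
    (D' : DB σ β) (b : Fin n → β) : Prop :=
  ∃ h : α → β, IsHom h D D' ∧ ∀ i, h (a i) = b i

/-- The active domain of a database: the elements appearing in its facts. -/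
def adom {σ : Schema} {α : Type} (D : DB σ α) : Set α :=
  ⋃ f ∈ D, Set.range f.args

/-- A tree decomposition of a set of atoms `A` with respect to the set `E` of
    existentially quantified variables: a (possibly infinite) tree `T` together
    with bags `bag t ⊆ E` such that the existential variables of every atom are
    contained in some bag, and for every existential variable the set of nodes
    whose bag contains it induces a connected subtree. -/
structure TreeDecomp {σ : Schema} {V : Type} (A : DB σ V) (E : Set V) where
  node : Type
  T : SimpleGraph node
  isTree : T.IsTree
  bag : node → Set V
  bag_sub : ∀ t, bag t ⊆ E
  covers : ∀ f ∈ A, ∃ t, Set.range f.args ∩ E ⊆ bag t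
  conn : ∀ y ∈ E, (SimpleGraph.induce {t | y ∈ bag t} T).Connected

/-- The decomposition has width at most `k`: every bag is covered by at most
    `k` atoms of `A`. -/
def TreeDecomp.widthLE {σ : Schema} {V : Type} {A : DB σ V} {E : Set V}
    (td : TreeDecomp A E) (k : ℕ) : Prop :=
  ∀ t, ∃ S : Finset (Atom σ V), ↑S ⊆ A ∧ S.card ≤ k ∧
    td.bag t ⊆ ⋃ f ∈ (S : Set (Atom σ V)), Set.range f.args

/-- The atoms `A` (with existential variables `E`) have generalized
    hypertreewidth at most `k`. -/
def ghwAuxLE {σ : Schema} {V : Type} (A : DB σ V) (E : Set V) (k : ℕ) : Prop :=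
  ∃ td : TreeDecomp A E, td.widthLE k

/-- A conjunctive query over `σ` with `n` free variables: a finite set of atoms
    over a type of variables, together with the tuple of free variables.
    Its canonical database is `atoms`. -/
structure CQ (σ : Schema) (n : ℕ) where
  Var : Type
  atoms : DB σ Var
  free : Fin n → Var
  finAtoms : atoms.Finite

namespace CQ

variable {σ : Schema} {n : ℕ}

/-- The existentially quantified variables of a CQ: variables occurring in its
    atoms that are not free. -/
def existVars (q : CQ σ n) : Set q.Var := adom q.atoms \ Set.range q.free

/-- `q` has generalized hypertreewidth at most `k`, i.e. `q ∈ GHW(k)`. -/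
def ghwLE (q : CQ σ n) (k : ℕ) : Prop := ghwAuxLE q.atoms q.existVars k

/-- The result of evaluating `q` over a database `D` (with constants from `ℕ`):
    all tuples of elements of `D` to which the canonical database of `q` maps
    homomorphically (sending the free variables to the tuple). -/
def eval (q : CQ σ n) (D : DB σ ℕ) : Set (Fin n → ℕ) :=
  {a | (∀ i, a i ∈ adom D) ∧ HomTup q.atoms q.free D a}

/-- Containment of CQs: `q ⊆ q'`, i.e. `q(D) ⊆ q'(D)` for every (finite) database. -/
def le (q q' : CQ σ n) : Prop :=
  ∀ D : DB σ ℕ, D.Finite → q.eval D ⊆ q'.eval D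

/-- Equivalence of CQs: mutual containment. -/
def equiv (q q' : CQ σ n) : Prop := q.le q' ∧ q'.le q

end CQ

/-- `q'` is a `GHW(k)`-overapproximation of `q`: `q' ∈ GHW(k)`, `q ⊆ q'`, and
    there is no `q'' ∈ GHW(k)` with `q ⊆ q'' ⊆ q'` and `q'' ≢ q'`. -/
def IsOverapprox {σ : Schema} {n : ℕ} (k : ℕ) (q q' : CQ σ n) : Prop :=
  q'.ghwLE k ∧ q.le q' ∧
    ¬ ∃ q'' : CQ σ n, q''.ghwLE k ∧ q.le q'' ∧ q''.le q' ∧ ¬ q''.equiv q'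

/-- `q'` is a `GHW(k)`-underapproximation of `q`: `q' ∈ GHW(k)`, `q' ⊆ q`, and
    there is no `q'' ∈ GHW(k)` with `q' ⊆ q'' ⊆ q` and `q'' ≢ q'`. -/
def IsUnderapprox {σ : Schema} {n : ℕ} (k : ℕ) (q q' : CQ σ n) : Prop :=
  q'.ghwLE k ∧ q'.le q ∧
    ¬ ∃ q'' : CQ σ n, q''.ghwLE k ∧ q'.le q'' ∧ q''.le q ∧ ¬ q''.equiv q'

/-- `q' ⊑_q q''`: the symmetric difference of `q''` and `q` is contained in the
    symmetric difference of `q'` and `q`, over every (finite) database. -/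
def deltaLE {σ : Schema} {n : ℕ} (q q' q'' : CQ σ n) : Prop :=
  ∀ D : DB σ ℕ, D.Finite →
    symmDiff (q.eval D) (q''.eval D) ⊆ symmDiff (q.eval D) (q'.eval D)

/-- `q'` is a `GHW(k)`-Δ-approximation of `q`: `q' ∈ GHW(k)` and `q'` is maximal
    with respect to the partial order `⊑_q` on `GHW(k)`. -/
def IsDeltaApprox {σ : Schema} {n : ℕ} (k : ℕ) (q q' : CQ σ n) : Prop :=
  q'.ghwLE k ∧
    ¬ ∃ q'' : CQ σ n, q''.ghwLE k ∧ deltaLE q q' q'' ∧ ¬ deltaLE q q'' q'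

/-- `U` is covered by at most `k` atoms of `D`. -/
def kCovered {σ : Schema} {α : Type} (k : ℕ) (D : DB σ α) (U : Set α) : Prop :=
  ∃ S : Finset (Atom σ α), ↑S ⊆ D ∧ S.card ≤ k ∧
    U ⊆ ⋃ f ∈ (S : Set (Atom σ α)), Set.range f.args

/-- `U` is a `k`-union of `D`: the union of the element sets of at most `k`
    atoms of `D`. -/
def kUnion {σ : Schema} {α : Type} (k : ℕ) (D : DB σ α) (U : Set α) : Prop :=
  ∃ S : Finset (Atom σ α), ↑S ⊆ D ∧ S.card ≤ k ∧
    U = ⋃ f ∈ (S : Set (Atom σ α)), Set.range f.args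

/-- The map `h` on the pebbled set `U`, extended by `a ↦ b` on the distinguished
    tuples, is a partial homomorphism from `D` to `D'`: `h` sends `a` to `b` and
    every fact of `D` whose elements lie in `U ∪ range a` to a fact of `D'`. -/
def PartialOk {σ : Schema} {α β : Type} {n : ℕ} (D : DB σ α) (D' : DB σ β)
    (a : Fin n → α) (b : Fin n → β) (U : Set α) (h : α → β) : Prop :=
  (∀ i, h (a i) = b i) ∧
  ∀ f ∈ D, Set.range f.args ⊆ U ∪ Set.range a → f.map h ∈ D'

/-- `(D, a) →_k (D', b)`: Duplicator has a winning strategy in the existential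
    `k`-cover game on `(D, a)` and `(D', b)`, presented as a nonempty family of
    positions (pebbled set + partial homomorphism) that is closed under
    Spoiler placing a pebble (provided the pebbled elements stay covered by at
    most `k` atoms of `D`) and under removing pebbles. -/
def PebbleWin {σ : Schema} {α β : Type} {n : ℕ} (k : ℕ) (D : DB σ α) (a : Fin n → α)
    (D' : DB σ β) (b : Fin n → β) : Prop :=
  ∃ F : Set (Set α × (α → β)),
    (∃ h, (∅, h) ∈ F) ∧
    (∀ p ∈ F, kCovered k D p.1 ∧ PartialOk D D' a b p.1 p.2) ∧
    (∀ p ∈ F, ∀ c : α, kCovered k D (insert c p.1) →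
      ∃ p' ∈ F, p'.1 = insert c p.1 ∧ ∀ x ∈ p.1, p'.2 x = p.2 x) ∧
    (∀ p ∈ F, ∀ U, U ⊆ p.1 → ∃ p' ∈ F, p'.1 = U ∧ ∀ x ∈ U, p'.2 x = p.2 x)

/-- Duplicator can survive `c` more rounds of the compact existential `k`-cover
    game from the position with pebbled set `U` and partial map `h`: whatever
    `k`-union `U'` Spoiler plays next, Duplicator has a consistent partial
    homomorphism on `U'` from which she can survive `c - 1` more rounds. -/
def WinRounds {σ : Schema} {α β : Type} {n : ℕ} (k : ℕ) (D : DB σ α) (a : Fin n → α)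
    (D' : DB σ β) (b : Fin n → β) : ℕ → Set α → (α → β) → Prop
  | 0, _, _ => True
  | c + 1, U, h => ∀ U', kUnion k D U' →
      ∃ h', (∀ x ∈ U ∩ U', h' x = h x) ∧ PartialOk D D' a b U' h' ∧
        WinRounds k D a D' b c U' h'

/-- `(D, a) →_k^c (D', b)`: Duplicator has a winning strategy in the first `c`
    rounds of the compact existential `k`-cover game on `(D, a)` and `(D', b)`. -/
def PebbleWinC {σ : Schema} {α β : Type} {n : ℕ} (k c : ℕ) (D : DB σ α) (a : Fin n → α)
    (D' : DB σ β) (b : Fin n → β) : Prop :=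
  ∃ h0, PartialOk D D' a b ∅ h0 ∧ WinRounds k D a D' b c ∅ h0

/-- The Gaifman graph of a set of atoms `A`: vertices are elements, with an edge
    between two distinct elements that occur together in some atom of `A`. -/
def gaifmanOf {σ : Schema} {V : Type} (A : DB σ V) : SimpleGraph V where
  Adj z z' := z ≠ z' ∧ ∃ f ∈ A, z ∈ Set.range f.args ∧ z' ∈ Set.range f.args
  symm := by
    constructor
    rintro z z' ⟨hne, f, hf, hz, hz'⟩
    exact ⟨hne.symm, f, hf, hz', hz⟩
  loopless := by
    constructor
    rintro z ⟨hne, -⟩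
    exact hne rfl

/-- A Boolean CQ is connected if its Gaifman graph (on the variables occurring
    in it) is connected. -/
def CQ.IsConnected {σ : Schema} (q : CQ σ 0) : Prop :=
  (SimpleGraph.induce (adom q.atoms) (gaifmanOf q.atoms)).Connected

/-- `q` is a core: no CQ with fewer atoms is (homomorphically) equivalent to it. -/
def IsCore {σ : Schema} {n : ℕ} (q : CQ σ n) : Prop :=
  ∀ q' : CQ σ n, HomTup q.atoms q.free q'.atoms q'.free →
    HomTup q'.atoms q'.free q.atoms q.free →
    q.atoms.ncard ≤ q'.atoms.ncard

/-! ### Auxiliary development for `statement0` -/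

namespace Statement0Aux

attribute [local instance] Classical.propDecidable

variable {σ : Schema} {n : ℕ}

/-- Head of a list of sets, with `∅` for the empty list. -/
def headU : List (Set ℕ) → Set ℕ
  | [] => ∅
  | U :: _ => U

/-- Valid nodes of the unraveling: lists of `k`-unions of `D`, of length `≤ c`. -/
def Valid (k c : ℕ) (D : DB σ ℕ) (s : List (Set ℕ)) : Prop :=
  s.length ≤ c ∧ ∀ U ∈ s, kUnion k D U

lemma Valid.tail {k c : ℕ} {D : DB σ ℕ} {U : Set ℕ} {t : List (Set ℕ)}
    (h : Valid k c D (U :: t)) : Valid k c D t :=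
  ⟨le_trans (Nat.le_succ _) h.1, fun V hV => h.2 V (List.mem_cons_of_mem _ hV)⟩

lemma Valid.nil {k c : ℕ} {D : DB σ ℕ} : Valid k c D [] :=
  ⟨Nat.zero_le _, by simp⟩

/-- Canonical representative node for the pebbled element `x` at node `s`. -/
noncomputable def cvar (x : ℕ) : List (Set ℕ) → List (Set ℕ)
  | [] => []
  | U :: t => if x ∈ headU t then cvar x t else U :: t

lemma cvar_cons {x : ℕ} {t : List (Set ℕ)} (U : Set ℕ) (hx : x ∈ headU t) :
    cvar x (U :: t) = cvar x t := by
  simp only [cvar, if_pos hx]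

lemma cvar_cons_neg {x : ℕ} {t : List (Set ℕ)} (U : Set ℕ) (hx : x ∉ headU t) :
    cvar x (U :: t) = U :: t := by
  simp only [cvar, if_neg hx]

lemma cvar_suffix (x : ℕ) : ∀ s : List (Set ℕ), cvar x s <:+ s
  | [] => List.suffix_rfl
  | U :: t => by
      by_cases h : x ∈ headU t
      · rw [cvar_cons U h]
        exact (cvar_suffix x t).trans (List.suffix_cons _ _)
      · rw [cvar_cons_neg U h]

lemma headU_cvar {x : ℕ} : ∀ {s : List (Set ℕ)}, x ∈ headU s → x ∈ headU (cvar x s)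
  | [], h => h
  | U :: t, h => by
      by_cases hV : x ∈ headU t
      · rw [cvar_cons U hV]; exact headU_cvar (s := t) hV
      · rw [cvar_cons_neg U hV]; exact h

lemma cvar_idem {x : ℕ} : ∀ {s : List (Set ℕ)}, cvar x (cvar x s) = cvar x s
  | [] => rfl
  | U :: t => by
      by_cases hV : x ∈ headU t
      · rw [cvar_cons U hV]; exact cvar_idem (s := t)
      · rw [cvar_cons_neg U hV, cvar_cons_neg U hV]

/-- The variables of the unraveling query. -/
abbrev Var (a : Fin n → ℕ) : Type := {x : ℕ // x ∈ Set.range a} ⊕ (List (Set ℕ) × ℕ)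

/-- The variable used for element `x` at node `s`. -/
noncomputable def varOf (a : Fin n → ℕ) (s : List (Set ℕ)) (x : ℕ) : Var a :=
  if hx : x ∈ Set.range a then Sum.inl ⟨x, hx⟩ else Sum.inr (cvar x s, x)

/-- The atom of the unraveling corresponding to fact `f` at node `s`. -/
noncomputable def atomAt (a : Fin n → ℕ) (s : List (Set ℕ)) (f : Atom σ ℕ) : Atom σ (Var a) :=
  ⟨f.rel, fun i => varOf a s (f.args i)⟩

/-- The atoms of the unraveling query. -/
def QAtoms (k c : ℕ) (D : DB σ ℕ) (a : Fin n → ℕ) : DB σ (Var a) :=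
  {g | ∃ s f, Valid k c D s ∧ f ∈ D ∧ Set.range f.args ⊆ headU s ∪ Set.range a ∧
    g = atomAt a s f}

lemma finite_listsLE {γ : Type*} {T : Set γ} (hT : T.Finite) :
    ∀ m : ℕ, {s : List γ | s.length ≤ m ∧ ∀ u ∈ s, u ∈ T}.Finite
  | 0 => Set.Finite.subset (Set.finite_singleton []) (by
      rintro s ⟨h1, -⟩
      simpa using List.length_eq_zero_iff.mp (Nat.le_zero.mp h1))
  | m + 1 => by
      have hprev := finite_listsLE hT m
      refine Set.Finite.subset (Set.Finite.insert []
        (Set.Finite.image (fun p : γ × List γ => p.1 :: p.2) (hT.prod hprev))) ?_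
      rintro s ⟨h1, h2⟩
      cases s with
      | nil => exact Set.mem_insert _ _
      | cons u t =>
          refine Set.mem_insert_of_mem _ ⟨(u, t), ⟨h2 u (List.mem_cons_self),
            ⟨(by simpa using h1), fun v hv => h2 v (List.mem_cons_of_mem _ hv)⟩⟩, rfl⟩

lemma finite_kUnions {k : ℕ} {D : DB σ ℕ} (hD : D.Finite) : {U | kUnion k D U}.Finite := by
  refine Set.Finite.subset (Set.Finite.image (fun A : Set (Atom σ ℕ) => ⋃ f ∈ A, Set.range f.args)
    hD.finite_subsets) ?_
  rintro U ⟨S, hSD, -, hU⟩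
  exact ⟨(S : Set (Atom σ ℕ)), hSD, hU.symm⟩

lemma finite_valid {k c : ℕ} {D : DB σ ℕ} (hD : D.Finite) : {s | Valid k c D s}.Finite :=
  (finite_listsLE (finite_kUnions (k := k) hD) c)

lemma finite_QAtoms {k c : ℕ} {D : DB σ ℕ} {a : Fin n → ℕ} (hD : D.Finite) :
    (QAtoms k c D a).Finite := by
  refine Set.Finite.subset (Set.Finite.image (fun p : List (Set ℕ) × Atom σ ℕ => atomAt a p.1 p.2)
    ((finite_valid (k := k) (c := c) hD).prod hD)) ?_
  rintro g ⟨s, f, hs, hf, -, rfl⟩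
  exact ⟨(s, f), ⟨hs, hf⟩, rfl⟩

/-- The unraveling query of depth `c`. -/
noncomputable def Q (k c : ℕ) (D : DB σ ℕ) (hD : D.Finite) (a : Fin n → ℕ) : CQ σ n where
  Var := Var a
  atoms := QAtoms k c D a
  free := fun i => Sum.inl ⟨a i, ⟨i, rfl⟩⟩
  finAtoms := finite_QAtoms hD

section Game

variable (k c : ℕ) (D : DB σ ℕ) (a : Fin n → ℕ) (D' : DB σ ℕ) (b : Fin n → ℕ)

lemma winRounds_succ (m : ℕ) (U : Set ℕ) (h : ℕ → ℕ) :
    WinRounds k D a D' b (m + 1) U h ↔ ∀ U', kUnion k D U' →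
      ∃ h', (∀ x ∈ U ∩ U', h' x = h x) ∧ PartialOk D D' a b U' h' ∧
        WinRounds k D a D' b m U' h' := Iff.rfl

/-- Duplicator's responses along a branch of the unraveling. -/
noncomputable def Hfun (h0 : ℕ → ℕ) : List (Set ℕ) → ℕ → ℕ
  | [] => h0
  | U :: t =>
      if hv : kUnion k D U ∧ WinRounds k D a D' b ((c - (t.length + 1)) + 1) (headU t)
          (Hfun h0 t)
      then Classical.choose (hv.2 U hv.1)
      else h0

variable {k c D a D' b} {h0 : ℕ → ℕ}

lemma Hfun_spec (hbase : PartialOk D D' a b ∅ h0 ∧ WinRounds k D a D' b c ∅ h0) :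
    ∀ s, Valid k c D s →
      (PartialOk D D' a b (headU s) (Hfun k c D a D' b h0 s) ∧
       WinRounds k D a D' b (c - s.length) (headU s) (Hfun k c D a D' b h0 s)) ∧
      (∀ U t, s = U :: t → ∀ x, x ∈ headU t → x ∈ U →
        Hfun k c D a D' b h0 s x = Hfun k c D a D' b h0 t x) := by
  intro s
  induction s with
  | nil =>
      intro _
      exact ⟨⟨hbase.1, hbase.2⟩, by rintro U t h; cases h⟩
  | cons U t ih =>
      intro hs
      have ht := hs.tail
      have hU : kUnion k D U := hs.2 U (List.mem_cons_self)
      have hlen : t.length + 1 ≤ c := by simpa using hs.1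
      have heq : c - t.length = (c - (t.length + 1)) + 1 := by omega
      have hW : WinRounds k D a D' b ((c - (t.length + 1)) + 1) (headU t)
          (Hfun k c D a D' b h0 t) := by
        rw [← heq]; exact (ih ht).1.2
      have hv : kUnion k D U ∧ WinRounds k D a D' b ((c - (t.length + 1)) + 1) (headU t)
          (Hfun k c D a D' b h0 t) := ⟨hU, hW⟩
      have hdef : Hfun k c D a D' b h0 (U :: t) = Classical.choose (hv.2 U hv.1) := by
        rw [Hfun, dif_pos hv]
      obtain ⟨hagr, hpok, hwr⟩ := Classical.choose_spec (hv.2 U hv.1)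
      refine ⟨⟨?_, ?_⟩, ?_⟩
      · rw [hdef]; exact hpok
      · rw [hdef]
        show WinRounds k D a D' b (c - (t.length + 1)) U _
        exact hwr
      · rintro U' t' hc x hxt hxU
        injection hc with h1 h2
        subst h1; subst h2
        rw [hdef]
        exact hagr x ⟨hxt, hxU⟩

lemma Hfun_cvar (hbase : PartialOk D D' a b ∅ h0 ∧ WinRounds k D a D' b c ∅ h0) :
    ∀ s, Valid k c D s → ∀ x, x ∈ headU s →
      Hfun k c D a D' b h0 (cvar x s) x = Hfun k c D a D' b h0 s x := by
  intro s
  induction s with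
  | nil => intro _ x hx; cases hx
  | cons U t ih =>
      intro hs x hx
      by_cases hV : x ∈ headU t
      · rw [cvar_cons U hV, ih hs.tail x hV,
          (Hfun_spec hbase (U :: t) hs).2 U t rfl x hV hx]
      · rw [cvar_cons_neg U hV]

lemma win_to_hom (hwin : PebbleWinC k c D a D' b) :
    HomTup (QAtoms k c D a) (fun i => (Sum.inl ⟨a i, ⟨i, rfl⟩⟩ : Var a)) D' b := by
  obtain ⟨h0, hp0, hwr⟩ := hwin
  have hbase : PartialOk D D' a b ∅ h0 ∧ WinRounds k D a D' b c ∅ h0 := ⟨hp0, hwr⟩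
  classical
  refine ⟨fun v => match v with
    | Sum.inl w => b (Classical.choose (Set.mem_range.mp w.2))
    | Sum.inr p => Hfun k c D a D' b h0 p.1 p.2, ?_, ?_⟩
  · rintro f ⟨s, f0, hs, hf0, hsub, rfl⟩
    have key : ∀ x ∈ Set.range f0.args,
        (match varOf a s x with
          | Sum.inl w => b (Classical.choose (Set.mem_range.mp w.2))
          | Sum.inr p => Hfun k c D a D' b h0 p.1 p.2) =
        Hfun k c D a D' b h0 s x := by
      intro x hx
      by_cases hxa : x ∈ Set.range a
      · have hv : varOf a s x = Sum.inl ⟨x, hxa⟩ := by unfold varOf; exact dif_pos hxa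
        rw [hv]
        have hj := Classical.choose_spec (Set.mem_range.mp hxa)
        have h2 := (Hfun_spec hbase s hs).1.1.1 (Classical.choose (Set.mem_range.mp hxa))
        rw [hj] at h2
        exact h2.symm
      · have hv : varOf a s x = Sum.inr (cvar x s, x) := by unfold varOf; exact dif_neg hxa
        rw [hv]
        exact Hfun_cvar hbase s hs x ((hsub hx).resolve_right hxa)
    have hmap : (atomAt a s f0).map (fun v => match v with
        | Sum.inl w => b (Classical.choose (Set.mem_range.mp w.2))
        | Sum.inr p => Hfun k c D a D' b h0 p.1 p.2) =
        f0.map (Hfun k c D a D' b h0 s) := by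
      show Atom.mk _ _ = Atom.mk _ _
      congr 1
      funext i
      exact key (f0.args i) ⟨i, rfl⟩
    rw [hmap]
    exact (Hfun_spec hbase s hs).1.1.2 f0 hf0 hsub
  · intro i
    have hj := Classical.choose_spec (Set.mem_range.mp (⟨i, rfl⟩ : a i ∈ Set.range a))
    have h2 := hp0.1 (Classical.choose (Set.mem_range.mp (⟨i, rfl⟩ : a i ∈ Set.range a)))
    rw [hj] at h2
    show b (Classical.choose (Set.mem_range.mp (⟨i, rfl⟩ : a i ∈ Set.range a))) = b i
    rw [← h2]
    exact hp0.1 i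

lemma hom_to_win
    (hhom : HomTup (QAtoms k c D a) (fun i => (Sum.inl ⟨a i, ⟨i, rfl⟩⟩ : Var a)) D' b) :
    PebbleWinC k c D a D' b := by
  obtain ⟨g, hg, hgf⟩ := hhom
  set hm : List (Set ℕ) → ℕ → ℕ := fun s x => g (varOf a s x) with hhm
  have hma : ∀ s i, hm s (a i) = b i := by
    intro s i
    show g (varOf a s (a i)) = b i
    have hv : varOf a s (a i) = Sum.inl ⟨a i, ⟨i, rfl⟩⟩ := by
      unfold varOf; exact dif_pos ⟨i, rfl⟩
    rw [hv]
    exact hgf i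
  have hpok : ∀ s, Valid k c D s → PartialOk D D' a b (headU s) (hm s) := by
    intro s hs
    refine ⟨hma s, ?_⟩
    intro f hf hsub
    exact hg _ ⟨s, f, hs, hf, hsub, rfl⟩
  have hagree : ∀ (U' : Set ℕ) s, ∀ x, x ∈ headU s → hm (U' :: s) x = hm s x := by
    intro U' s x hxs
    show g (varOf a (U' :: s) x) = g (varOf a s x)
    by_cases hxa : x ∈ Set.range a
    · have hv1 : varOf a (U' :: s) x = Sum.inl ⟨x, hxa⟩ := by unfold varOf; exact dif_pos hxa
      have hv2 : varOf a s x = Sum.inl ⟨x, hxa⟩ := by unfold varOf; exact dif_pos hxa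
      rw [hv1, hv2]
    · have hv1 : varOf a (U' :: s) x = Sum.inr (cvar x (U' :: s), x) := by
        unfold varOf; exact dif_neg hxa
      have hv2 : varOf a s x = Sum.inr (cvar x s, x) := by unfold varOf; exact dif_neg hxa
      rw [hv1, hv2, cvar_cons U' hxs]
  have main : ∀ m s, Valid k c D s → m ≤ c - s.length →
      WinRounds k D a D' b m (headU s) (hm s) := by
    intro m
    induction m with
    | zero => intro s _ _; exact trivial
    | succ m ih =>
        intro s hs hmc
        rw [winRounds_succ]
        intro U' hU'
        have hlen : s.length < c := by omega
        have hs' : Valid k c D (U' :: s) := by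
          refine ⟨by simpa using hlen, ?_⟩
          intro V hV
          rcases List.mem_cons.mp hV with rfl | h
          · exact hU'
          · exact hs.2 V h
        refine ⟨hm (U' :: s), ?_, hpok (U' :: s) hs', ?_⟩
        · rintro x ⟨hx1, hx2⟩
          exact hagree U' s x hx1
        · exact ih (U' :: s) hs' (by simp only [List.length_cons]; omega)
  exact ⟨hm [], hpok [] Valid.nil, main c [] Valid.nil (by simp)⟩

end Game

section Tree

variable (k c : ℕ) (D : DB σ ℕ) (a : Fin n → ℕ)

lemma Valid.suffix {k c : ℕ} {D : DB σ ℕ} {s t : List (Set ℕ)} (h : t <:+ s)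
    (hs : Valid k c D s) : Valid k c D t :=
  ⟨le_trans h.length_le hs.1, fun U hU => hs.2 U (h.subset hU)⟩

/-- Nodes of the unraveling tree. -/
def NodeT : Type := {s : List (Set ℕ) // Valid k c D s}

/-- The unraveling tree: each nonempty node is joined to its tail. -/
def TreeG : SimpleGraph (NodeT k c D) where
  Adj s t := (s.1 = t.1.tail ∧ t.1 ≠ []) ∨ (t.1 = s.1.tail ∧ s.1 ≠ [])
  symm := by constructor; rintro s t (h | h); exacts [Or.inr h, Or.inl h]
  loopless := by
    constructor
    rintro s (⟨h1, h2⟩ | ⟨h1, h2⟩) <;>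
    · have hlen := congrArg List.length h1
      have hpos : 0 < s.1.length := List.length_pos_iff.mpr h2
      rw [List.length_tail] at hlen
      omega

variable {k c D}

lemma treeG_reach : ∀ (s : List (Set ℕ)) (hs : Valid k c D s),
    (TreeG k c D).Reachable ⟨s, hs⟩ ⟨[], Valid.nil⟩ := by
  intro s
  induction s with
  | nil => intro hs; exact SimpleGraph.Reachable.refl _
  | cons U t ih =>
      intro hs
      have hadj : (TreeG k c D).Adj ⟨U :: t, hs⟩ ⟨t, hs.tail⟩ :=
        Or.inr ⟨rfl, List.cons_ne_nil U t⟩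
      exact hadj.reachable.trans (ih hs.tail)

lemma treeG_connected : (TreeG k c D).Connected := by
  rw [SimpleGraph.connected_iff]
  exact ⟨fun s t => (treeG_reach s.1 s.2).trans (treeG_reach t.1 t.2).symm,
    ⟨⟨[], Valid.nil⟩⟩⟩

lemma path_snd {γ : Type*} {G : SimpleGraph γ} {u v : γ} (q : G.Walk u v) (hq : q.IsPath)
    (hlen : 2 ≤ q.length) : ∃ w, G.Adj u w ∧ w ∈ q.support ∧ w ≠ v := by
  cases q with
  | nil => simp at hlen
  | cons hadj r =>
    rename_i w
    refine ⟨w, hadj, ?_, ?_⟩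
    · rw [SimpleGraph.Walk.support_cons]
      exact List.mem_cons_of_mem _ r.start_mem_support
    · rintro rfl
      have hrp : r.IsPath := hq.of_cons
      have hrl : 1 ≤ r.length := by
        have h1 : (SimpleGraph.Walk.cons hadj r).length = r.length + 1 :=
          SimpleGraph.Walk.length_cons _ _
        omega
      cases r with
      | nil => simp at hrl
      | cons hadj2 r2 =>
        have hnd := (SimpleGraph.Walk.isPath_def _).mp hrp
        rw [SimpleGraph.Walk.support_cons] at hnd
        exact (List.nodup_cons.mp hnd).1 r2.end_mem_support

lemma no_cycle_aux (u : NodeT k c D) (q : (TreeG k c D).Walk u u) (hqc : q.IsCycle)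
    (hmax : ∀ w ∈ q.support, w.1.length ≤ u.1.length) : False := by
  have h3 := hqc.three_le_length
  have key : ∀ w, (TreeG k c D).Adj u w → w.1.length ≤ u.1.length → w.1 = u.1.tail := by
    intro w hadj hle
    rcases hadj with ⟨h1, h2⟩ | ⟨h1, h2⟩
    · exfalso
      have hlen := congrArg List.length h1
      have hpos : 0 < w.1.length := List.length_pos_iff.mpr h2
      rw [List.length_tail] at hlen
      omega
    · exact h1
  cases q with
  | nil => simp at h3
  | cons hadj1 q' =>
    rename_i w1
    have hnd : q'.support.Nodup := by
      have h := hqc.support_nodup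
      rwa [SimpleGraph.Walk.support_cons, List.tail_cons] at h
    have hq'p : q'.IsPath := (SimpleGraph.Walk.isPath_def _).mpr hnd
    have hlen2 : 2 ≤ q'.reverse.length := by
      have h1 : (SimpleGraph.Walk.cons hadj1 q').length = q'.length + 1 :=
        SimpleGraph.Walk.length_cons _ _
      have h2 : q'.reverse.length = q'.length := SimpleGraph.Walk.length_reverse _
      omega
    obtain ⟨w2, hadj2, hw2sup, hw2ne⟩ := path_snd q'.reverse hq'p.reverse hlen2
    have hmem1 : w1 ∈ (SimpleGraph.Walk.cons hadj1 q').support := by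
      rw [SimpleGraph.Walk.support_cons]
      exact List.mem_cons_of_mem _ q'.start_mem_support
    have hmem2 : w2 ∈ (SimpleGraph.Walk.cons hadj1 q').support := by
      rw [SimpleGraph.Walk.support_reverse] at hw2sup
      rw [SimpleGraph.Walk.support_cons]
      exact List.mem_cons_of_mem _ (List.mem_reverse.mp hw2sup)
    have e1 : w1.1 = u.1.tail := key w1 hadj1 (hmax w1 hmem1)
    have e2 : w2.1 = u.1.tail := key w2 hadj2 (hmax w2 hmem2)
    exact hw2ne (Subtype.ext (e2.trans e1.symm))

lemma treeG_acyclic : (TreeG k c D).IsAcyclic := by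
  intro v p hp
  classical
  obtain ⟨u, hu, hmax⟩ := Finset.exists_max_image p.support.toFinset
    (fun w : NodeT k c D => w.1.length) ⟨v, List.mem_toFinset.mpr p.start_mem_support⟩
  have hu' : u ∈ p.support := List.mem_toFinset.mp hu
  refine no_cycle_aux u (p.rotate u hu') (hp.rotate hu') ?_
  intro w hw
  refine hmax w (List.mem_toFinset.mpr ?_)
  have hperm := SimpleGraph.Walk.support_rotate p u hu'
  rw [SimpleGraph.Walk.support_eq_cons (p.rotate u hu')] at hw
  rcases List.mem_cons.mp hw with rfl | hw'
  · exact hu'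
  · exact List.mem_of_mem_tail (hperm.mem_iff.mp hw')

variable (k c D)

/-- Bags of the tree decomposition of the unraveling. -/
def Qbag (t : NodeT k c D) : Set (Var a) :=
  {v | ∃ x, x ∈ headU t.1 ∧ x ∉ Set.range a ∧ v = Sum.inr (cvar x t.1, x)}

variable {k c D a}

lemma Q_ghwLE (hD : D.Finite) : (Q k c D hD a).ghwLE k := by
  classical
  refine ⟨⟨NodeT k c D, TreeG k c D, ⟨treeG_connected, treeG_acyclic⟩, Qbag k c D a,
    ?_, ?_, ?_⟩, ?_⟩
  · -- bag_sub
    rintro t v ⟨x, hx1, hxa, rfl⟩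
    constructor
    · -- in adom
      obtain ⟨s, hs⟩ := t
      cases s with
      | nil => cases hx1
      | cons U r =>
          obtain ⟨S, hSD, hcard, hU⟩ := hs.2 U (List.mem_cons_self)
          have hxU : x ∈ ⋃ f ∈ (S : Set (Atom σ ℕ)), Set.range f.args := hU ▸ hx1
          obtain ⟨f, hf, hxf⟩ := Set.mem_iUnion₂.mp hxU
          obtain ⟨i, hi⟩ := hxf
          have hfD : f ∈ D := hSD hf
          have hsub : Set.range f.args ⊆ headU (U :: r) ∪ Set.range a := fun y hy =>
            Or.inl (by
              show y ∈ U
              rw [hU]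
              exact Set.mem_iUnion₂.mpr ⟨f, hf, hy⟩)
          have hmem : atomAt a (U :: r) f ∈ QAtoms k c D a :=
            ⟨U :: r, f, hs, hfD, hsub, rfl⟩
          refine Set.mem_iUnion₂.mpr ⟨atomAt a (U :: r) f, hmem, ⟨i, ?_⟩⟩
          show varOf a (U :: r) (f.args i) = _
          rw [hi]
          unfold varOf
          exact dif_neg hxa
    · rintro ⟨j, hj⟩
      exact Sum.inl_ne_inr hj
  · -- covers
    rintro f ⟨s, f0, hs, hf0, hsub, rfl⟩
    refine ⟨⟨s, hs⟩, ?_⟩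
    rintro v ⟨hv1, hv2⟩
    obtain ⟨i, rfl⟩ := hv1
    by_cases hxa : f0.args i ∈ Set.range a
    · exfalso
      have hv : varOf a s (f0.args i) = Sum.inl ⟨f0.args i, hxa⟩ := by
        unfold varOf; exact dif_pos hxa
      obtain ⟨j, hj⟩ := hxa
      refine hv2.2 ⟨j, ?_⟩
      show Sum.inl _ = (atomAt a s f0).args i
      show Sum.inl _ = varOf a s (f0.args i)
      rw [hv]
      exact congrArg Sum.inl (Subtype.ext hj)
    · have hxh : f0.args i ∈ headU s := (hsub ⟨i, rfl⟩).resolve_right hxa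
      have hv : (atomAt a s f0).args i = Sum.inr (cvar (f0.args i) s, f0.args i) := by
        show varOf a s (f0.args i) = _
        unfold varOf; exact dif_neg hxa
      exact ⟨f0.args i, hxh, hxa, hv⟩
  · -- conn
    intro y hy
    obtain ⟨hy1, hy2⟩ := hy
    obtain ⟨f, hf, hyf⟩ := Set.mem_iUnion₂.mp hy1
    obtain ⟨s, f0, hs, hf0, hsub, rfl⟩ := hf
    obtain ⟨i, hiy⟩ := hyf
    by_cases hxa : f0.args i ∈ Set.range a
    · exfalso
      have hv : varOf a s (f0.args i) = Sum.inl ⟨f0.args i, hxa⟩ := by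
        unfold varOf; exact dif_pos hxa
      obtain ⟨j, hj⟩ := hxa
      refine hy2 ⟨j, ?_⟩
      rw [← hiy]
      show Sum.inl _ = varOf a s (f0.args i)
      rw [hv]
      exact congrArg Sum.inl (Subtype.ext hj)
    · have hxh : f0.args i ∈ headU s := (hsub ⟨i, rfl⟩).resolve_right hxa
      have hyeq : y = Sum.inr (cvar (f0.args i) s, f0.args i) := by
        rw [← hiy]
        show varOf a s (f0.args i) = _
        unfold varOf; exact dif_neg hxa
      set x := f0.args i with hxdef
      have hs₀v : Valid k c D (cvar x s) := Valid.suffix (cvar_suffix x s) hs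
      have hbag : ∀ t : NodeT k c D,
          y ∈ Qbag k c D a t ↔ x ∈ headU t.1 ∧ cvar x t.1 = cvar x s := by
        intro t
        constructor
        · rintro ⟨x', hx'1, hx'2, hx'eq⟩
          rw [hyeq] at hx'eq
          injection hx'eq with h
          injection h with h1 h2
          subst h2
          exact ⟨hx'1, h1.symm⟩
        · rintro ⟨h1, h2⟩
          exact ⟨x, h1, hxa, by rw [hyeq, h2]⟩
      have ht₀ : y ∈ Qbag k c D a ⟨cvar x s, hs₀v⟩ :=
        (hbag _).mpr ⟨headU_cvar hxh, cvar_idem⟩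
      rw [SimpleGraph.connected_iff]
      refine ⟨?_, ⟨⟨⟨cvar x s, hs₀v⟩, ht₀⟩⟩⟩
      have claim : ∀ (s' : List (Set ℕ)) (hs' : Valid k c D s')
          (hm : x ∈ headU s' ∧ cvar x s' = cvar x s),
          (SimpleGraph.induce {t | y ∈ Qbag k c D a t} (TreeG k c D)).Reachable
            ⟨⟨s', hs'⟩, (hbag _).mpr hm⟩ ⟨⟨cvar x s, hs₀v⟩, ht₀⟩ := by
        intro s'
        induction s' with
        | nil => rintro hs' ⟨h1, -⟩; cases h1
        | cons U r ih =>
            rintro hs' ⟨h1, h2⟩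
            by_cases hr : x ∈ headU r
            · have h2' : cvar x r = cvar x s := by rw [← cvar_cons U hr]; exact h2
              have hadj : (SimpleGraph.induce {t | y ∈ Qbag k c D a t}
                  (TreeG k c D)).Adj
                  ⟨⟨U :: r, hs'⟩, (hbag _).mpr ⟨h1, h2⟩⟩
                  ⟨⟨r, hs'.tail⟩, (hbag _).mpr ⟨hr, h2'⟩⟩ :=
                Or.inr ⟨rfl, List.cons_ne_nil U r⟩
              exact hadj.reachable.trans (ih hs'.tail ⟨hr, h2'⟩)
            · have h2' : U :: r = cvar x s := by rw [← h2, cvar_cons_neg U hr]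
              have heq : (⟨⟨U :: r, hs'⟩, (hbag _).mpr ⟨h1, h2⟩⟩ :
                  {t | y ∈ Qbag k c D a t}) = ⟨⟨cvar x s, hs₀v⟩, ht₀⟩ :=
                Subtype.ext (Subtype.ext h2')
              rw [heq]
      rintro ⟨⟨s', hs'⟩, hp⟩ ⟨⟨s'', hs''⟩, hp'⟩
      have hm1 := (hbag ⟨s', hs'⟩).mp hp
      have hm2 := (hbag ⟨s'', hs''⟩).mp hp'
      exact (claim s' hs' hm1).trans (claim s'' hs'' hm2).symm
  · -- width
    rintro ⟨s, hs⟩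
    cases s with
    | nil =>
        refine ⟨∅, by simp, by simp, ?_⟩
        rintro v ⟨x, hx1, -, -⟩
        cases hx1
    | cons U r =>
        obtain ⟨S, hSD, hcard, hU⟩ := hs.2 U (List.mem_cons_self)
        refine ⟨S.image (atomAt a (U :: r)), ?_, ?_, ?_⟩
        · intro g hg
          obtain ⟨f, hfS, rfl⟩ := Finset.mem_image.mp (Finset.mem_coe.mp hg)
          refine ⟨U :: r, f, hs, hSD hfS, fun y hy => Or.inl ?_, rfl⟩
          show y ∈ U
          rw [hU]
          exact Set.mem_iUnion₂.mpr ⟨f, hfS, hy⟩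
        · exact le_trans Finset.card_image_le hcard
        · rintro v ⟨x, hx1, hxa, rfl⟩
          have hxU : x ∈ ⋃ f ∈ (S : Set (Atom σ ℕ)), Set.range f.args := hU ▸ hx1
          obtain ⟨f, hf, i, hi⟩ := Set.mem_iUnion₂.mp hxU
          refine Set.mem_iUnion₂.mpr ⟨atomAt a (U :: r) f,
            Finset.mem_coe.mpr (Finset.mem_image_of_mem _ hf), ⟨i, ?_⟩⟩
          show varOf a (U :: r) (f.args i) = _
          rw [hi]
          unfold varOf
          exact dif_neg hxa

end Tree

end Statement0Aux

/-- For every database `D`, every tuple `a` of elements of `D` and every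
`c ≥ 1`, there is a CQ `q_c ∈ GHW(k)` such that for every database `D'` and
tuple `b` of elements of `D'`:
`b ∈ q_c(D')` iff `(q_c, x̄_c) → (D', b)` iff `(D, a) →_k^c (D', b)`. -/
theorem statement0 (σ : Schema) (k : ℕ) (hk : 1 ≤ k) (n : ℕ)
    (D : DB σ ℕ) (hD : D.Finite) (a : Fin n → ℕ) (ha : ∀ i, a i ∈ adom D)
    (c : ℕ) (hc : 1 ≤ c) :
    ∃ qc : CQ σ n, qc.ghwLE k ∧
      ∀ (D' : DB σ ℕ), D'.Finite → ∀ b : Fin n → ℕ, (∀ i, b i ∈ adom D') →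
        ((b ∈ qc.eval D' ↔ HomTup qc.atoms qc.free D' b) ∧
         (HomTup qc.atoms qc.free D' b ↔ PebbleWinC k c D a D' b)) := by
  refine ⟨Statement0Aux.Q k c D hD a, Statement0Aux.Q_ghwLE hD, ?_⟩
  intro D' hD' b hb
  refine ⟨⟨fun h => h.2, fun h => ⟨hb, h⟩⟩, ?_, ?_⟩
  · exact Statement0Aux.hom_to_win
  · exact Statement0Aux.win_to_hom
end

section
/- Fix k ≥ 1 and let q(x̄) and q'(x̄') be CQs with q' ∈ GHW(k). Then q' is a GHW(k)-overapproximation of q if and only if (i) q ⊆ q' and (ii) for every CQ q''(x̄'') ∈ GHW(k), q ⊆ q'' implies q' ⊆ q''. -/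
open SimpleGraph Sum

namespace BridgeTree

variable {V1 V2 : Type} (T1 : SimpleGraph V1) (T2 : SimpleGraph V2) (r1 : V1) (r2 : V2)

/-- Two graphs joined by a single bridge edge between `r1` and `r2`. -/
def bridge : SimpleGraph (V1 ⊕ V2) where
  Adj x y :=
    match x, y with
    | .inl a, .inl b => T1.Adj a b
    | .inr a, .inr b => T2.Adj a b
    | .inl a, .inr b => a = r1 ∧ b = r2
    | .inr a, .inl b => a = r2 ∧ b = r1
  symm := by
    constructor
    rintro (a | a) (b | b) h
    · exact h.symm
    · exact ⟨h.2, h.1⟩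
    · exact ⟨h.2, h.1⟩
    · exact h.symm
  loopless := by
    constructor
    rintro (a | a) h
    · exact T1.loopless.irrefl a h
    · exact T2.loopless.irrefl a h

variable {T1 T2 r1 r2}

@[simp] lemma bridge_adj_inl_inl {a b : V1} :
    (bridge T1 T2 r1 r2).Adj (inl a) (inl b) ↔ T1.Adj a b := Iff.rfl

@[simp] lemma bridge_adj_inr_inr {a b : V2} :
    (bridge T1 T2 r1 r2).Adj (inr a) (inr b) ↔ T2.Adj a b := Iff.rfl

@[simp] lemma bridge_adj_inl_inr {a : V1} {b : V2} :
    (bridge T1 T2 r1 r2).Adj (inl a) (inr b) ↔ a = r1 ∧ b = r2 := Iff.rfl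

@[simp] lemma bridge_adj_inr_inl {a : V2} {b : V1} :
    (bridge T1 T2 r1 r2).Adj (inr a) (inl b) ↔ a = r2 ∧ b = r1 := Iff.rfl

/-- The left inclusion as a graph homomorphism. -/
def inlHom : T1 →g bridge T1 T2 r1 r2 where
  toFun := inl
  map_rel' := fun h => h

/-- The right inclusion as a graph homomorphism. -/
def inrHom : T2 →g bridge T1 T2 r1 r2 where
  toFun := inr
  map_rel' := fun h => h


/-- Swapping the two sides is a graph isomorphism. -/
def swapIso : bridge T1 T2 r1 r2 ≃g bridge T2 T1 r2 r1 where
  toEquiv := Equiv.sumComm V1 V2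
  map_rel_iff' := by
    rintro (a | a) (b | b) <;> simp [Equiv.sumComm, and_comm]

lemma bridge_connected (h1 : T1.Connected) (h2 : T2.Connected) :
    (bridge T1 T2 r1 r2).Connected := by
  have hne : Nonempty V1 := h1.nonempty
  rw [connected_iff]
  refine ⟨fun u v => ?_, ⟨inl hne.some⟩⟩
  have hbr : (bridge T1 T2 r1 r2).Reachable (inl r1) (inr r2) :=
    (show (bridge T1 T2 r1 r2).Adj (inl r1) (inr r2) from ⟨rfl, rfl⟩).reachable
  rcases u with a | a <;> rcases v with b | b
  · exact (h1 a b).map inlHom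
  · exact (((h1 a r1).map inlHom).trans hbr).trans ((h2 r2 b).map inrHom)
  · exact (((h2 a r2).map inrHom).trans hbr.symm).trans ((h1 r1 b).map inlHom)
  · exact (h2 a b).map inrHom

/-- A walk between left vertices avoiding `inr r2` is the image of a walk in `T1`. -/
lemma proj_left :
    ∀ {x y : V1 ⊕ V2} (p : (bridge T1 T2 r1 r2).Walk x y) (a b : V1)
      (hx : x = inl a) (hy : y = inl b), inr r2 ∉ p.support →
      ∃ q : T1.Walk a b, p.copy hx hy = q.map inlHom := by
  intro x y p
  induction p with
  | nil =>
    intro a b hx hy hs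
    subst hx
    obtain rfl : a = b := inl_injective hy
    exact ⟨Walk.nil, rfl⟩
  | @cons u z y h p ih =>
    intro a b hx hy hs
    subst hx
    rcases z with c | c
    · obtain ⟨q, hq⟩ := ih c b rfl hy (fun hc => hs (List.mem_cons_of_mem _ hc))
      refine ⟨Walk.cons (show T1.Adj a c from h) q, ?_⟩
      rw [Walk.copy_cons, Walk.map_cons, ← hq]
      rfl
    · exfalso
      have hc2 : c = r2 := h.2
      subst hc2
      exact hs (List.mem_cons_of_mem _ (Walk.start_mem_support p))

/-- A walk from the right side to the left side uses the bridge edge. -/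
lemma cross_edge :
    ∀ {x y : V1 ⊕ V2} (p : (bridge T1 T2 r1 r2).Walk x y) (a : V2) (b : V1),
      x = inr a → y = inl b → s(inl r1, inr r2) ∈ p.edges := by
  intro x y p
  induction p with
  | nil =>
    intro a b hx hy
    subst hx
    exact absurd hy (by simp)
  | @cons u z y h p ih =>
    intro a b hx hy
    subst hx
    rcases z with c | c
    · obtain ⟨h1, h2⟩ : a = r2 ∧ c = r1 := h
      show s(inl r1, inr r2) ∈ s(inr a, inl c) :: p.edges
      refine List.mem_cons.mpr (Or.inl ?_)
      rw [h1, h2, Sym2.eq_swap]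
    · exact List.mem_cons_of_mem _ (ih c b rfl hy)

lemma no_cycle_at_left_of_avoid (h1 : T1.IsAcyclic) (a : V1)
    (c : (bridge T1 T2 r1 r2).Walk (inl a) (inl a)) (hs : inr r2 ∉ c.support) :
    ¬ c.IsCycle := by
  intro hc
  obtain ⟨q, hq⟩ := proj_left c a a rfl rfl hs
  rw [Walk.copy_rfl_rfl] at hq
  rw [hq] at hc
  exact h1 q ((Walk.map_isCycle_iff_of_injective inl_injective).mp hc)

lemma no_cycle_at_left (h1 : T1.IsAcyclic) (h2 : T2.IsAcyclic) (a : V1)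
    (c : (bridge T1 T2 r1 r2).Walk (inl a) (inl a)) : ¬ c.IsCycle := by
  classical
  intro hc
  rcases Classical.em ((inr r2 : V1 ⊕ V2) ∈ c.support) with hs | hs
  · -- rotate to base `inr r2`
    set c' := c.rotate _ hs with hc'def
    have hc' : c'.IsCycle := hc.rotate hs
    rcases Classical.em ((inl r1 : V1 ⊕ V2) ∈ c'.support) with ht | ht
    · -- cycle crosses the bridge twice
      have h1e : s(inl r1, inr r2) ∈ (c'.takeUntil (inl r1) ht).edges :=
        cross_edge _ r2 r1 rfl rfl
      have h2e : s(inl r1, inr r2) ∈ (c'.dropUntil (inl r1) ht).edges := by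
        have := cross_edge ((c'.dropUntil (inl r1) ht).reverse) r2 r1 rfl rfl
        rwa [Walk.edges_reverse, List.mem_reverse] at this
      have hnodup := hc'.edges_nodup
      rw [← Walk.take_spec c' ht, Walk.edges_append, List.nodup_append] at hnodup
      exact hnodup.2.2 _ h1e _ h2e rfl
    · -- cycle stays on the right: transport via `swapIso`
      have hcc : (c'.map swapIso.toHom).IsCycle :=
        ((Walk.map_isCycle_iff_of_injective swapIso.injective).mpr hc')
      have hts : (inr r1 : V2 ⊕ V1) ∉ (c'.map swapIso.toHom).support := by
        rw [Walk.support_map]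
        intro hmem
        obtain ⟨z, hz, hz2⟩ := List.mem_map.mp hmem
        have : z = inl r1 := swapIso.injective (by exact hz2)
        exact ht (this ▸ hz)
      exact no_cycle_at_left_of_avoid h2 r2 (c'.map swapIso.toHom) hts hcc
  · exact no_cycle_at_left_of_avoid h1 a c hs hc

lemma bridge_isAcyclic (h1 : T1.IsAcyclic) (h2 : T2.IsAcyclic) :
    (bridge T1 T2 r1 r2).IsAcyclic := by
  rintro (a | a) c hc
  · exact no_cycle_at_left h1 h2 a c hc
  · have hcc : (c.map swapIso.toHom).IsCycle :=
      (Walk.map_isCycle_iff_of_injective swapIso.injective).mpr hc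
    exact no_cycle_at_left h2 h1 a (c.map swapIso.toHom) hcc

lemma bridge_isTree (h1 : T1.IsTree) (h2 : T2.IsTree) :
    (bridge T1 T2 r1 r2).IsTree :=
  ⟨bridge_connected h1.isConnected h2.isConnected,
   bridge_isAcyclic h1.IsAcyclic h2.IsAcyclic⟩

end BridgeTree


section GhwLemmas

open Sum

/-- Transport a width-`k` tree decomposition along a map on variables. -/
lemma ghw_map {σ : Schema} {α β : Type} {A : DB σ α} {E : Set α} {k : ℕ} (g : α → β)
    (hpre : ∀ y y', y' ∈ E → g y = g y' → y ∈ E)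
    (hinj : Set.InjOn g E)
    (h : ghwAuxLE A E k) : ghwAuxLE (Atom.map g '' A) (g '' E) k := by
  classical
  obtain ⟨td, hw⟩ := h
  refine ⟨⟨td.node, td.T, td.isTree, fun t => g '' td.bag t, ?_, ?_, ?_⟩, ?_⟩
  · exact fun t => Set.image_mono (td.bag_sub t)
  · rintro f' ⟨f, hf, rfl⟩
    obtain ⟨t, ht⟩ := td.covers f hf
    refine ⟨t, ?_⟩
    rintro x ⟨hx1, hx2⟩
    obtain ⟨i, hi⟩ := hx1
    obtain ⟨y', hy', hgy⟩ := hx2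
    have hyE : f.args i ∈ E := hpre _ _ hy' ((show g (f.args i) = x from hi).trans hgy.symm)
    exact ⟨f.args i, ht ⟨⟨i, rfl⟩, hyE⟩, hi⟩
  · intro x hx
    obtain ⟨y, hyE, rfl⟩ := hx
    have hset : {t | g y ∈ g '' td.bag t} = {t | y ∈ td.bag t} := by
      ext t
      constructor
      · rintro ⟨z, hz, hgz⟩
        have := hinj (td.bag_sub t hz) hyE hgz
        exact this ▸ hz
      · exact fun h => ⟨y, h, rfl⟩
    have hconn := td.conn y hyE
    rwa [← hset] at hconn
  · intro t
    obtain ⟨S, hS, hcard, hcov⟩ := hw t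
    refine ⟨S.image (Atom.map g), ?_, le_trans Finset.card_image_le hcard, ?_⟩
    · rw [Finset.coe_image]
      exact Set.image_mono hS
    · rintro x ⟨y, hy, rfl⟩
      have hy' := hcov hy
      simp only [Set.mem_iUnion, Finset.mem_coe, Finset.coe_image, Set.mem_image] at hy' ⊢
      obtain ⟨f, hfS, i, hi⟩ := hy'
      exact ⟨Atom.map g f, ⟨f, hfS, rfl⟩, i, by rw [← hi]; rfl⟩

/-- Combine two width-`k` tree decompositions for disjoint sets of existential
variables by joining the trees with a bridge edge. -/
lemma ghw_combine {σ : Schema} {V : Type} {B1 B2 : DB σ V} {E1 E2 : Set V} {k : ℕ}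
    (h1 : ghwAuxLE B1 E1 k) (h2 : ghwAuxLE B2 E2 k) (hd : Disjoint E1 E2)
    (h12 : ∀ f ∈ B1, ∀ y ∈ Set.range f.args, y ∉ E2)
    (h21 : ∀ f ∈ B2, ∀ y ∈ Set.range f.args, y ∉ E1) :
    ghwAuxLE (B1 ∪ B2) (E1 ∪ E2) k := by
  obtain ⟨t1, hw1⟩ := h1
  obtain ⟨t2, hw2⟩ := h2
  have hne1 : Nonempty t1.node := t1.isTree.isConnected.nonempty
  have hne2 : Nonempty t2.node := t2.isTree.isConnected.nonempty
  obtain ⟨r1⟩ := hne1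
  obtain ⟨r2⟩ := hne2
  refine ⟨⟨t1.node ⊕ t2.node, BridgeTree.bridge t1.T t2.T r1 r2,
      BridgeTree.bridge_isTree t1.isTree t2.isTree,
      Sum.elim t1.bag t2.bag, ?_, ?_, ?_⟩, ?_⟩
  · rintro (t | t)
    · exact (t1.bag_sub t).trans Set.subset_union_left
    · exact (t2.bag_sub t).trans Set.subset_union_right
  · rintro f (hf | hf)
    · obtain ⟨t, ht⟩ := t1.covers f hf
      refine ⟨inl t, ?_⟩
      rintro x ⟨hx1, hx2 | hx2⟩
      · exact ht ⟨hx1, hx2⟩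
      · exact absurd hx2 (h12 f hf x hx1)
    · obtain ⟨t, ht⟩ := t2.covers f hf
      refine ⟨inr t, ?_⟩
      rintro x ⟨hx1, hx2 | hx2⟩
      · exact absurd hx2 (h21 f hf x hx1)
      · exact ht ⟨hx1, hx2⟩
  · rintro y (hy | hy)
    · have hset : {t : t1.node ⊕ t2.node | y ∈ Sum.elim t1.bag t2.bag t} =
          Sum.inl '' {t | y ∈ t1.bag t} := by
        ext s
        rcases s with t | t
        · simp
        · simp only [Set.mem_setOf_eq, Sum.elim_inr, Set.mem_image]
          constructor
          · intro hyt
            exact absurd (t2.bag_sub t hyt) (fun h => Set.disjoint_left.mp hd hy h)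
          · rintro ⟨z, -, h⟩
            exact absurd h (by simp)
      rw [hset]
      refine SimpleGraph.Connected.map
        (⟨fun z => ⟨Sum.inl z.1, ⟨z.1, z.2, rfl⟩⟩, fun {p q} h => h⟩ :
          (SimpleGraph.induce {t | y ∈ t1.bag t} t1.T) →g
          (SimpleGraph.induce (Sum.inl '' {t | y ∈ t1.bag t})
            (BridgeTree.bridge t1.T t2.T r1 r2))) ?_ (t1.conn y hy)
      rintro ⟨x, hx⟩
      obtain ⟨t, ht, rfl⟩ := hx
      exact ⟨⟨t, ht⟩, rfl⟩
    · have hset : {t : t1.node ⊕ t2.node | y ∈ Sum.elim t1.bag t2.bag t} =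
          Sum.inr '' {t | y ∈ t2.bag t} := by
        ext s
        rcases s with t | t
        · simp only [Set.mem_setOf_eq, Sum.elim_inl, Set.mem_image]
          constructor
          · intro hyt
            exact absurd (t1.bag_sub t hyt) (fun h => Set.disjoint_right.mp hd hy h)
          · rintro ⟨z, -, h⟩
            exact absurd h (by simp)
        · simp
      rw [hset]
      refine SimpleGraph.Connected.map
        (⟨fun z => ⟨Sum.inr z.1, ⟨z.1, z.2, rfl⟩⟩, fun {p q} h => h⟩ :
          (SimpleGraph.induce {t | y ∈ t2.bag t} t2.T) →g
          (SimpleGraph.induce (Sum.inr '' {t | y ∈ t2.bag t})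
            (BridgeTree.bridge t1.T t2.T r1 r2))) ?_ (t2.conn y hy)
      rintro ⟨x, hx⟩
      obtain ⟨t, ht, rfl⟩ := hx
      exact ⟨⟨t, ht⟩, rfl⟩
  · rintro (t | t)
    · obtain ⟨S, hS, hc, hcov⟩ := hw1 t
      exact ⟨S, hS.trans Set.subset_union_left, hc, hcov⟩
    · obtain ⟨S, hS, hc, hcov⟩ := hw2 t
      exact ⟨S, hS.trans Set.subset_union_right, hc, hcov⟩

end GhwLemmas

section Conjunction

open Sum

variable {σ : Schema} {n : ℕ}

/-- The relation on free-variable indices generated by coincidences of free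
variables in either query. -/
def frel (u v : CQ σ n) : Fin n → Fin n → Prop :=
  fun i j => u.free i = u.free j ∨ v.free i = v.free j

/-- A canonical representative of the `Relation.EqvGen (frel u v)` class of `i`. -/
noncomputable def clrep (u v : CQ σ n) (i : Fin n) : Fin n :=
  @Quotient.out _ (Relation.EqvGen.setoid (frel u v)) (Quotient.mk (Relation.EqvGen.setoid (frel u v)) i)

lemma clrep_eqv (u v : CQ σ n) (i : Fin n) : Relation.EqvGen (frel u v) (clrep u v i) i :=
  @Quotient.mk_out _ (Relation.EqvGen.setoid (frel u v)) i

lemma clrep_sound (u v : CQ σ n) {i j : Fin n} (h : Relation.EqvGen (frel u v) i j) :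
    clrep u v i = clrep u v j := by
  unfold clrep
  congr 1
  exact Quotient.sound h

lemma clrep_idem (u v : CQ σ n) (i : Fin n) : clrep u v (clrep u v i) = clrep u v i :=
  clrep_sound u v (clrep_eqv u v i)

open Classical in
/-- Mapping the variables of `u` into the variables of the conjunction. -/
noncomputable def mlm (u v : CQ σ n) : u.Var → (Fin n ⊕ (u.Var ⊕ v.Var)) := fun y =>
  if h : ∃ i, u.free i = y then Sum.inl (clrep u v h.choose) else Sum.inr (Sum.inl y)

open Classical in
/-- Mapping the variables of `v` into the variables of the conjunction. -/
noncomputable def mrm (u v : CQ σ n) : v.Var → (Fin n ⊕ (u.Var ⊕ v.Var)) := fun y =>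
  if h : ∃ i, v.free i = y then Sum.inl (clrep u v h.choose) else Sum.inr (Sum.inr y)

lemma mlm_free (u v : CQ σ n) (i : Fin n) : mlm u v (u.free i) = Sum.inl (clrep u v i) := by
  unfold mlm
  rw [dif_pos ⟨i, rfl⟩]
  exact congrArg _ (clrep_sound u v (Relation.EqvGen.rel _ _ (Or.inl (Exists.choose_spec (⟨i, rfl⟩ : ∃ j, u.free j = u.free i)))))

lemma mrm_free (u v : CQ σ n) (i : Fin n) : mrm u v (v.free i) = Sum.inl (clrep u v i) := by
  unfold mrm
  rw [dif_pos ⟨i, rfl⟩]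
  exact congrArg _ (clrep_sound u v (Relation.EqvGen.rel _ _ (Or.inr (Exists.choose_spec (⟨i, rfl⟩ : ∃ j, v.free j = v.free i)))))

lemma mlm_not (u v : CQ σ n) {y : u.Var} (hy : y ∉ Set.range u.free) :
    mlm u v y = Sum.inr (Sum.inl y) :=
  dif_neg (fun ⟨i, hi⟩ => hy ⟨i, hi⟩)

lemma mrm_not (u v : CQ σ n) {y : v.Var} (hy : y ∉ Set.range v.free) :
    mrm u v y = Sum.inr (Sum.inr y) :=
  dif_neg (fun ⟨i, hi⟩ => hy ⟨i, hi⟩)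

/-- The conjunction of two CQs with the same free-variable tuple. -/
noncomputable def conjCQ (u v : CQ σ n) : CQ σ n where
  Var := Fin n ⊕ (u.Var ⊕ v.Var)
  atoms := Atom.map (mlm u v) '' u.atoms ∪ Atom.map (mrm u v) '' v.atoms
  free := fun i => Sum.inl (clrep u v i)
  finAtoms := (u.finAtoms.image _).union (v.finAtoms.image _)

lemma conj_eval_left (u v : CQ σ n) (D : DB σ ℕ) : (conjCQ u v).eval D ⊆ u.eval D := by
  rintro a ⟨had, H, hH, hfree⟩
  refine ⟨had, fun y => H (mlm u v y), ?_, ?_⟩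
  · intro f hf
    exact hH (f.map (mlm u v)) (Or.inl ⟨f, hf, rfl⟩)
  · intro i
    show H (mlm u v (u.free i)) = a i
    rw [mlm_free]
    exact hfree i

lemma conj_eval_right (u v : CQ σ n) (D : DB σ ℕ) : (conjCQ u v).eval D ⊆ v.eval D := by
  rintro a ⟨had, H, hH, hfree⟩
  refine ⟨had, fun y => H (mrm u v y), ?_, ?_⟩
  · intro f hf
    exact hH (f.map (mrm u v)) (Or.inr ⟨f, hf, rfl⟩)
  · intro i
    show H (mrm u v (v.free i)) = a i
    rw [mrm_free]
    exact hfree i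

lemma conj_eval_inter (u v : CQ σ n) (D : DB σ ℕ) :
    u.eval D ∩ v.eval D ⊆ (conjCQ u v).eval D := by
  rintro a ⟨⟨had, Hu, hHu, hfu⟩, ⟨-, Hv, hHv, hfv⟩⟩
  have hclass : ∀ i j, Relation.EqvGen (frel u v) i j → a i = a j := by
    intro i j h
    induction h with
    | rel i j hij =>
      rcases hij with h | h
      · rw [← hfu i, ← hfu j, h]
      · rw [← hfv i, ← hfv j, h]
    | refl i => rfl
    | symm i j _ ih => exact ih.symm
    | trans i j l _ _ ih1 ih2 => exact ih1.trans ih2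
  set H : (Fin n ⊕ (u.Var ⊕ v.Var)) → ℕ := Sum.elim a (Sum.elim Hu Hv) with hHdef
  have hml : ∀ y : u.Var, H (mlm u v y) = Hu y := by
    intro y
    by_cases h : ∃ i, u.free i = y
    · rw [mlm, dif_pos h]
      have hspec := Exists.choose_spec h
      show a (clrep u v h.choose) = Hu y
      have hfu' : Hu (u.free h.choose) = a h.choose := hfu _
      rw [hclass _ _ (clrep_eqv u v h.choose), ← hfu', hspec]
    · rw [mlm, dif_neg h]
      rfl
  have hmr : ∀ y : v.Var, H (mrm u v y) = Hv y := by
    intro y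
    by_cases h : ∃ i, v.free i = y
    · rw [mrm, dif_pos h]
      have hspec := Exists.choose_spec h
      show a (clrep u v h.choose) = Hv y
      have hfv' : Hv (v.free h.choose) = a h.choose := hfv _
      rw [hclass _ _ (clrep_eqv u v h.choose), ← hfv', hspec]
    · rw [mrm, dif_neg h]
      rfl
  refine ⟨had, H, ?_, fun i => ?_⟩
  · rintro f (⟨g, hg, rfl⟩ | ⟨g, hg, rfl⟩)
    · have : (g.map (mlm u v)).map H = g.map Hu := by
        unfold Atom.map
        exact congrArg _ (funext fun i0 => hml (g.args i0))
      exact (congrArg (· ∈ D) this).mpr (hHu g hg)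
    · have : (g.map (mrm u v)).map H = g.map Hv := by
        unfold Atom.map
        exact congrArg _ (funext fun i0 => hmr (g.args i0))
      exact (congrArg (· ∈ D) this).mpr (hHv g hg)
  · show a (clrep u v i) = a i
    exact hclass _ _ (clrep_eqv u v i)

lemma conj_existVars (u v : CQ σ n) :
    (conjCQ u v).existVars = mlm u v '' u.existVars ∪ mrm u v '' v.existVars := by
  ext x
  constructor
  · rintro ⟨hadom, hnf⟩
    simp only [adom, Set.mem_iUnion] at hadom
    obtain ⟨f, hf, i0, hi0⟩ := hadom
    rcases hf with ⟨g, hg, rfl⟩ | ⟨g, hg, rfl⟩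
    · by_cases hr : g.args i0 ∈ Set.range u.free
      · exfalso
        obtain ⟨i, hi⟩ := hr
        apply hnf
        refine ⟨clrep u v i, ?_⟩
        show Sum.inl (clrep u v (clrep u v i)) = x
        rw [clrep_idem, ← hi0]
        show _ = mlm u v (g.args i0)
        rw [← hi, mlm_free]
      · refine Or.inl ⟨g.args i0, ⟨?_, hr⟩, hi0⟩
        simp only [adom, Set.mem_iUnion]
        exact ⟨g, hg, i0, rfl⟩
    · by_cases hr : g.args i0 ∈ Set.range v.free
      · exfalso
        obtain ⟨i, hi⟩ := hr
        apply hnf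
        refine ⟨clrep u v i, ?_⟩
        show Sum.inl (clrep u v (clrep u v i)) = x
        rw [clrep_idem, ← hi0]
        show _ = mrm u v (g.args i0)
        rw [← hi, mrm_free]
      · refine Or.inr ⟨g.args i0, ⟨?_, hr⟩, hi0⟩
        simp only [adom, Set.mem_iUnion]
        exact ⟨g, hg, i0, rfl⟩
  · rintro (⟨y, ⟨hy1, hy2⟩, rfl⟩ | ⟨y, ⟨hy1, hy2⟩, rfl⟩)
    · constructor
      · simp only [adom, Set.mem_iUnion] at hy1 ⊢
        obtain ⟨g, hg, i0, hi0⟩ := hy1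
        exact Set.mem_biUnion (x := g.map (mlm u v)) (Or.inl ⟨g, hg, rfl⟩) ⟨i0, by rw [← hi0]; rfl⟩
      · rintro ⟨j, hj⟩
        rw [mlm_not u v hy2] at hj
        exact absurd hj (by simp [conjCQ])
    · constructor
      · simp only [adom, Set.mem_iUnion] at hy1 ⊢
        obtain ⟨g, hg, i0, hi0⟩ := hy1
        exact Set.mem_biUnion (x := g.map (mrm u v)) (Or.inr ⟨g, hg, rfl⟩) ⟨i0, by rw [← hi0]; rfl⟩
      · rintro ⟨j, hj⟩
        rw [mrm_not u v hy2] at hj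
        exact absurd hj (by simp [conjCQ])

lemma conj_ghw {k : ℕ} (u v : CQ σ n) (hu : u.ghwLE k) (hv : v.ghwLE k) :
    (conjCQ u v).ghwLE k := by
  have h1 : ghwAuxLE (Atom.map (mlm u v) '' u.atoms) (mlm u v '' u.existVars) k := by
    refine ghw_map (mlm u v) ?_ ?_ hu
    · intro y y' hy' heq
      rw [mlm_not u v hy'.2] at heq
      by_cases hr : y ∈ Set.range u.free
      · obtain ⟨i, rfl⟩ := hr
        rw [mlm_free] at heq
        exact absurd heq (by simp)
      · rw [mlm_not u v hr] at heq
        obtain rfl : y = y' := by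
          injection heq with h'
          injection h'
        exact hy'
    · intro y hy y' hy' heq
      rw [mlm_not u v hy.2, mlm_not u v hy'.2] at heq
      injection heq with h'
      injection h'
  have h2 : ghwAuxLE (Atom.map (mrm u v) '' v.atoms) (mrm u v '' v.existVars) k := by
    refine ghw_map (mrm u v) ?_ ?_ hv
    · intro y y' hy' heq
      rw [mrm_not u v hy'.2] at heq
      by_cases hr : y ∈ Set.range v.free
      · obtain ⟨i, rfl⟩ := hr
        rw [mrm_free] at heq
        exact absurd heq (by simp)
      · rw [mrm_not u v hr] at heq
        obtain rfl : y = y' := by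
          injection heq with h'
          injection h'
        exact hy'
    · intro y hy y' hy' heq
      rw [mrm_not u v hy.2, mrm_not u v hy'.2] at heq
      injection heq with h'
      injection h'
  have hcomb := ghw_combine h1 h2 ?_ ?_ ?_
  · unfold CQ.ghwLE
    rw [conj_existVars]
    exact hcomb
  · rw [Set.disjoint_left]
    rintro x ⟨y, hy, rfl⟩ ⟨z, hz, hzx⟩
    rw [mlm_not u v hy.2, mrm_not u v hz.2] at hzx
    injection hzx with h'
    injection h'
  · rintro f ⟨g, hg, rfl⟩ x ⟨i0, hi0⟩ ⟨z, hz, hzx⟩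
    rw [mrm_not u v hz.2] at hzx
    subst hzx
    have : mlm u v (g.args i0) = Sum.inr (Sum.inr z) := hi0
    by_cases hr : g.args i0 ∈ Set.range u.free
    · obtain ⟨i, hi⟩ := hr
      rw [← hi, mlm_free] at this
      exact absurd this (by simp)
    · rw [mlm_not u v hr] at this
      injection this with h'
      injection h'
  · rintro f ⟨g, hg, rfl⟩ x ⟨i0, hi0⟩ ⟨z, hz, hzx⟩
    rw [mlm_not u v hz.2] at hzx
    subst hzx
    have : mrm u v (g.args i0) = Sum.inr (Sum.inl z) := hi0
    by_cases hr : g.args i0 ∈ Set.range v.free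
    · obtain ⟨i, hi⟩ := hr
      rw [← hi, mrm_free] at this
      exact absurd this (by simp)
    · rw [mrm_not u v hr] at this
      injection this with h'
      injection h'

end Conjunction

/-- `q'` is a `GHW(k)`-overapproximation of `q` iff `q ⊆ q'` and `q'` is a
lower bound of the CQs in `GHW(k)` that contain `q`. -/
theorem statement2 (σ : Schema) (k n : ℕ) (hk : 1 ≤ k)
    (q q' : CQ σ n) (hq' : q'.ghwLE k) :
    IsOverapprox k q q' ↔
      (q.le q' ∧ ∀ q'' : CQ σ n, q''.ghwLE k → q.le q'' → q'.le q'') := by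
  constructor
  · rintro ⟨-, hle, hmax⟩
    refine ⟨hle, fun w hwg hqw => ?_⟩
    by_contra hnv
    apply hmax
    refine ⟨conjCQ q' w, conj_ghw q' w hq' hwg, ?_, ?_, ?_⟩
    · intro D hD a ha
      exact conj_eval_inter q' w D ⟨hle D hD ha, hqw D hD ha⟩
    · intro D hD
      exact conj_eval_left q' w D
    · rintro ⟨-, h2⟩
      exact hnv (fun D hD => (h2 D hD).trans (conj_eval_right q' w D))
  · rintro ⟨hle, hlb⟩
    refine ⟨hq', hle, ?_⟩
    rintro ⟨w, hwg, hqw, hwq', hne⟩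
    exact hne ⟨hwq', hlb w hwg hqw⟩
end

section
/- Fix k ≥ 1. For every CQ q(x̄) there is an infinite CQ q'(x̄') in GHW(k)^∞ such that for every database D (even countably infinite) and tuple ā of constants in D: ā ∈ q'(D) iff (q', x̄') → (D, ā) iff (q, x̄) →_k (D, ā). -/
/-- A possibly infinite CQ (a member of the class `GHW(k)^∞` once its width is
    bounded): countably many atoms and finitely many free variables. -/
structure CQI (σ : Schema) (n : ℕ) where
  Var : Type
  atoms : DB σ Var
  free : Fin n → Var
  ctblAtoms : atoms.Countable

namespace CQI

variable {σ : Schema} {n : ℕ}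

/-- The existentially quantified variables of a possibly infinite CQ. -/
def existVars (q : CQI σ n) : Set q.Var := adom q.atoms \ Set.range q.free

/-- `q` has generalized hypertreewidth at most `k`, i.e. `q ∈ GHW(k)^∞`. -/
def ghwLE (q : CQI σ n) (k : ℕ) : Prop := ghwAuxLE q.atoms q.existVars k

/-- Evaluation of a possibly infinite CQ over a database. -/
def eval (q : CQI σ n) (D : DB σ ℕ) : Set (Fin n → ℕ) :=
  {a | (∀ i, a i ∈ adom D) ∧ HomTup q.atoms q.free D a}

/-- Containment (with respect to finite databases only). -/
def le (q q' : CQI σ n) : Prop :=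
  ∀ D : DB σ ℕ, D.Finite → q.eval D ⊆ q'.eval D

end CQI

/-- Every finite CQ is in particular a possibly infinite CQ. -/
def CQ.toI {σ : Schema} {n : ℕ} (q : CQ σ n) : CQI σ n :=
  ⟨q.Var, q.atoms, q.free, q.finAtoms.countable⟩

section Aux
attribute [local instance] Classical.propDecidable

def uS {σ : Schema} {α : Type} (S : Finset (Atom σ α)) : Set α :=
  ⋃ f ∈ (S : Set (Atom σ α)), Set.range f.args

def headSet {σ : Schema} {α : Type} : List (Finset (Atom σ α)) → Set α
  | [] => ∅
  | S :: _ => uS S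

noncomputable def birth {σ : Schema} {α : Type} :
    List (Finset (Atom σ α)) → α → List (Finset (Atom σ α))
  | [], _ => []
  | S :: s, v => if v ∈ headSet s then birth s v else S :: s

def ValidP {σ : Schema} {α : Type} (k : ℕ) (A : DB σ α) (s : List (Finset (Atom σ α))) : Prop :=
  ∀ S ∈ s, ↑S ⊆ A ∧ S.card ≤ k

theorem Atom.map_map {σ : Schema} {α β γ : Type} (g : α → β) (h : β → γ) (f : Atom σ α) :
    (f.map g).map h = f.map (fun x => h (g x)) := rfl

theorem Atom.map_congr {σ : Schema} {α β : Type} {g h : α → β} {f : Atom σ α}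
    (H : ∀ x ∈ Set.range f.args, g x = h x) : f.map g = f.map h := by
  unfold Atom.map
  exact congrArg (Atom.mk f.rel) (funext fun i => H _ ⟨i, rfl⟩)

theorem mem_adom_iff {σ : Schema} {α : Type} {D : DB σ α} {x : α} :
    x ∈ adom D ↔ ∃ f ∈ D, x ∈ Set.range f.args := by simp [adom]

theorem kCovered_mono {σ : Schema} {α : Type} {k : ℕ} {D : DB σ α} {U U' : Set α}
    (h : U' ⊆ U) (hU : kCovered k D U) : kCovered k D U' := by
  obtain ⟨S, h1, h2, h3⟩ := hU
  exact ⟨S, h1, h2, h.trans h3⟩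

theorem kCovered_empty {σ : Schema} {α : Type} (k : ℕ) (D : DB σ α) : kCovered k D ∅ :=
  ⟨∅, by simp, by simp, by simp⟩

theorem kCovered_finite {σ : Schema} {α : Type} {k : ℕ} {D : DB σ α} {U : Set α}
    (hU : kCovered k D U) : U.Finite := by
  obtain ⟨S, _, _, h3⟩ := hU
  exact Set.Finite.subset (Set.Finite.biUnion S.finite_toSet
    (fun f _ => Set.finite_range f.args)) h3

theorem kCovered_uS {σ : Schema} {α : Type} {k : ℕ} {A : DB σ α} {S : Finset (Atom σ α)}
    (h1 : ↑S ⊆ A) (h2 : S.card ≤ k) : kCovered k A (uS S) :=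
  ⟨S, h1, h2, subset_rfl⟩

theorem kCovered_headSet {σ : Schema} {α : Type} {k : ℕ} {A : DB σ α}
    {s : List (Finset (Atom σ α))} (h : ValidP k A s) : kCovered k A (headSet s) := by
  cases s with
  | nil => exact kCovered_empty k A
  | cons S t => exact kCovered_uS (h S (by simp)).1 (h S (by simp)).2

theorem birth_suffix {σ : Schema} {α : Type} (s : List (Finset (Atom σ α))) (v : α) :
    birth s v <:+ s := by
  induction s with
  | nil => simp [birth]
  | cons S t ih =>
    rw [birth]
    split
    · exact ih.trans (List.suffix_cons S t)
    · exact List.suffix_rfl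

theorem birth_headSet {σ : Schema} {α : Type} {s : List (Finset (Atom σ α))} {v : α}
    (h : v ∈ headSet s) : v ∈ headSet (birth s v) := by
  induction s with
  | nil => exact absurd h (by simp [headSet])
  | cons S t ih =>
    rw [birth]
    split
    · exact ih ‹_›
    · exact h

theorem birth_idem {σ : Schema} {α : Type} (s : List (Finset (Atom σ α))) (v : α) :
    birth (birth s v) v = birth s v := by
  induction s with
  | nil => simp [birth]
  | cons S t ih =>
    rw [birth]
    split
    · exact ih
    · rw [birth, if_neg ‹_›]

theorem birth_cons_of_mem {σ : Schema} {α : Type} {s : List (Finset (Atom σ α))} {v : α}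
    (S : Finset (Atom σ α)) (h : v ∈ headSet s) : birth (S :: s) v = birth s v := by
  rw [birth, if_pos h]

theorem ValidP_suffix {σ : Schema} {α : Type} {k : ℕ} {A : DB σ α}
    {s s' : List (Finset (Atom σ α))} (h : s' <:+ s) (hs : ValidP k A s) : ValidP k A s' :=
  fun S hS => hs S (h.subset hS)

theorem ValidP_nil {σ : Schema} {α : Type} (k : ℕ) (A : DB σ α) : ValidP k A [] := by
  intro S hS; simp at hS

end Aux
section Aux2
attribute [local instance] Classical.propDecidable

variable {σ : Schema} {n : ℕ}

/-- Variable type of the unraveling. -/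
abbrev VarU (σ : Schema) (α : Type) : Type := (List (Finset (Atom σ α)) × α) ⊕ α

/-- Encoding of a variable of `q` at a path `s`. -/
noncomputable def enc (q : CQ σ n) (s : List (Finset (Atom σ q.Var))) (v : q.Var) :
    VarU σ q.Var :=
  if v ∈ Set.range q.free then Sum.inr v else Sum.inl (birth s v, v)

/-- Atoms of the unraveling. -/
def atomsU (k : ℕ) (q : CQ σ n) : DB σ (VarU σ q.Var) :=
  {g | ∃ s, ValidP k q.atoms s ∧ ∃ f ∈ q.atoms,
    Set.range f.args ⊆ headSet s ∪ Set.range q.free ∧ g = f.map (enc q s)}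

theorem validP_finite (k : ℕ) (q : CQ σ n) :
    {S : Finset (Atom σ q.Var) | ↑S ⊆ q.atoms ∧ S.card ≤ k}.Finite := by
  have h1 : {S : Finset (Atom σ q.Var) | ↑S ⊆ q.atoms ∧ S.card ≤ k} ⊆
      (fun S : Finset (Atom σ q.Var) => (S : Set (Atom σ q.Var))) ⁻¹'
        {t : Set (Atom σ q.Var) | t ⊆ q.atoms} := fun S hS => hS.1
  refine Set.Finite.subset ?_ h1
  exact Set.Finite.preimage Finset.coe_injective.injOn q.finAtoms.finite_subsets

theorem atomsU_countable (k : ℕ) (q : CQ σ n) : (atomsU k q).Countable := by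
  classical
  set K := {S : Finset (Atom σ q.Var) | ↑S ⊆ q.atoms ∧ S.card ≤ k} with hK
  have hKfin : K.Finite := validP_finite k q
  haveI : Countable K := hKfin.countable.to_subtype
  haveI : Countable q.atoms := q.finAtoms.countable.to_subtype
  set PathT := {s : List (Finset (Atom σ q.Var)) // ValidP k q.atoms s} with hP
  have hinj : Function.Injective
      (fun s : PathT => s.1.attach.map (fun x => (⟨x.1, (s.2 x.1 x.2)⟩ : K))) := by
    intro s t hst
    have h1 := congrArg (List.map (Subtype.val : K → Finset (Atom σ q.Var))) hst
    simp only [List.map_map] at h1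
    have h2 : ∀ (u : PathT), List.map ((Subtype.val : K → Finset (Atom σ q.Var)) ∘
        (fun x : {x // x ∈ u.1} => (⟨x.1, (u.2 x.1 x.2)⟩ : K))) u.1.attach = u.1 := by
      intro u
      simpa [Function.comp] using List.attach_map_val u.1 (fun x => x)
    rw [h2 s, h2 t] at h1
    exact Subtype.ext h1
  haveI : Countable PathT := hinj.countable
  have : atomsU k q ⊆ Set.range (fun p : PathT × q.atoms => (p.2.1.map (enc q p.1.1))) := by
    rintro g ⟨s, hs, f, hf, _, rfl⟩
    exact ⟨(⟨s, hs⟩, ⟨f, hf⟩), rfl⟩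
  exact (Set.countable_range _).mono this

/-- The unraveling of `q` as a possibly infinite CQ. -/
noncomputable def unravel (k : ℕ) (q : CQ σ n) : CQI σ n :=
  ⟨VarU σ q.Var, atomsU k q, fun i => Sum.inr (q.free i), atomsU_countable k q⟩

end Aux2
section Aux3
attribute [local instance] Classical.propDecidable

variable {σ : Schema} {n : ℕ}

/-- Nodes of the unraveling tree: valid paths. -/
abbrev NodeT (k : ℕ) (q : CQ σ n) : Type :=
  {s : List (Finset (Atom σ q.Var)) // ValidP k q.atoms s}

/-- The unraveling tree. -/
def treeG (k : ℕ) (q : CQ σ n) : SimpleGraph (NodeT k q) where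
  Adj s t := (∃ S, t.1 = S :: s.1) ∨ (∃ S, s.1 = S :: t.1)
  symm := by constructor; rintro s t (h | h); exacts [Or.inr h, Or.inl h]
  loopless := by
    constructor; rintro s (⟨S, h⟩ | ⟨S, h⟩) <;> simpa using congrArg List.length h

theorem treeG_reachable (k : ℕ) (q : CQ σ n) :
    ∀ (l : List (Finset (Atom σ q.Var))) (h : ValidP k q.atoms l),
      (treeG k q).Reachable ⟨l, h⟩ ⟨[], ValidP_nil k q.atoms⟩ := by
  intro l
  induction l with
  | nil => intro h; exact SimpleGraph.Reachable.refl _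
  | cons S t ih =>
    intro h
    have ht : ValidP k q.atoms t := fun T hT => h T (List.mem_cons_of_mem S hT)
    exact (SimpleGraph.Adj.reachable (Or.inr ⟨S, rfl⟩)).trans (ih ht)

theorem treeG_connected (k : ℕ) (q : CQ σ n) : (treeG k q).Connected := by
  haveI : Nonempty (NodeT k q) := ⟨⟨[], ValidP_nil k q.atoms⟩⟩
  exact ⟨fun x y =>
    (treeG_reachable k q x.1 x.2).trans (treeG_reachable k q y.1 y.2).symm⟩

theorem treeG_noCross (k : ℕ) (q : CQ σ n) (u : NodeT k q) (S : Finset (Atom σ q.Var))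
    (hw : ValidP k q.atoms (S :: u.1)) :
    ∀ {x y : NodeT k q},
      ((treeG k q) \ SimpleGraph.fromEdgeSet {s(u, ⟨S :: u.1, hw⟩)}).Walk x y →
      ¬ (S :: u.1) <:+ x.1 → (S :: u.1) <:+ y.1 → False := by
  intro x y p
  induction p with
  | nil => exact fun h1 h2 => h1 h2
  | @cons a b c hadj p ih =>
    intro h1 h3
    by_cases hb : (S :: u.1) <:+ b.1
    · rw [SimpleGraph.sdiff_adj] at hadj
      obtain ⟨hG, hne⟩ := hadj
      have hab : a ≠ b := hG.ne
      rcases hG with ⟨T, hT⟩ | ⟨T, hT⟩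
      · rw [hT] at hb
        rcases List.suffix_cons_iff.mp hb with heq | hsuf
        · have heq' := heq.symm
          injection heq' with hTS htl
          have ha : a = u := Subtype.ext htl
          have hbw : b = (⟨S :: u.1, hw⟩ : NodeT k q) := by
            apply Subtype.ext
            rw [hT, hTS, htl]
          apply hne
          rw [SimpleGraph.fromEdgeSet_adj]
          refine ⟨?_, hab⟩
          rw [ha, hbw]
          rfl
        · exact h1 hsuf
      · exact h1 (hb.trans (hT ▸ List.suffix_cons T b.1))
    · exact ih hb h3

theorem treeG_bridge_cons (k : ℕ) (q : CQ σ n) (v : NodeT k q) (S : Finset (Atom σ q.Var))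
    (hw : ValidP k q.atoms (S :: v.1)) :
    (treeG k q).IsBridge s(v, (⟨S :: v.1, hw⟩ : NodeT k q)) := by
  refine SimpleGraph.isBridge_iff.mpr ?_
  rintro ⟨p⟩
  refine treeG_noCross k q v S hw p (fun h => ?_) List.suffix_rfl
  have := h.length_le
  simp at this

theorem treeG_acyclic (k : ℕ) (q : CQ σ n) : (treeG k q).IsAcyclic := by
  rw [SimpleGraph.isAcyclic_iff_forall_adj_isBridge]
  rintro v w (⟨S, hS⟩ | ⟨S, hS⟩)
  · obtain ⟨l, hl⟩ := w
    simp only at hS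
    subst hS
    exact treeG_bridge_cons k q v S hl
  · obtain ⟨l, hl⟩ := v
    simp only at hS
    subst hS
    rw [Sym2.eq_swap]
    exact treeG_bridge_cons k q w S hl

theorem enc_free {q : CQ σ n} {s : List (Finset (Atom σ q.Var))} {v : q.Var}
    (h : v ∈ Set.range q.free) : enc q s v = Sum.inr v := by
  unfold enc; rw [if_pos h]

theorem enc_nonfree {q : CQ σ n} {s : List (Finset (Atom σ q.Var))} {v : q.Var}
    (h : v ∉ Set.range q.free) : enc q s v = Sum.inl (birth s v, v) := by
  unfold enc; rw [if_neg h]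

theorem inl_adom {k : ℕ} {q : CQ σ n} {t : List (Finset (Atom σ q.Var))} {v : q.Var}
    (h : Sum.inl (t, v) ∈ adom (atomsU k q)) :
    v ∉ Set.range q.free ∧ ValidP k q.atoms t ∧ v ∈ headSet t ∧ birth t v = t := by
  rw [mem_adom_iff] at h
  obtain ⟨g, ⟨s, hs, f, hf, hsub, rfl⟩, i, hi⟩ := h
  have hi' : enc q s (f.args i) = Sum.inl (t, v) := hi
  by_cases hfree : f.args i ∈ Set.range q.free
  · rw [enc_free hfree] at hi'
    exact absurd hi' (by simp)
  · rw [enc_nonfree hfree] at hi'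
    injection hi' with h'
    injection h' with hbt hv
    subst hv
    have hmem : f.args i ∈ headSet s := by
      rcases hsub ⟨i, rfl⟩ with h' | h'
      · exact h'
      · exact absurd h' hfree
    refine ⟨hfree, ?_, ?_, ?_⟩
    · exact hbt ▸ ValidP_suffix (birth_suffix s (f.args i)) hs
    · exact hbt ▸ birth_headSet hmem
    · exact hbt ▸ birth_idem s (f.args i)

theorem inr_adom {k : ℕ} {q : CQ σ n} {w : q.Var}
    (h : Sum.inr w ∈ adom (atomsU k q)) : w ∈ Set.range q.free := by
  rw [mem_adom_iff] at h
  obtain ⟨g, ⟨s, hs, f, hf, hsub, rfl⟩, i, hi⟩ := h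
  have hi' : enc q s (f.args i) = Sum.inr w := hi
  rw [enc] at hi'
  split at hi'
  · have : f.args i = w := by injection hi'
    exact this ▸ ‹_›
  · exact absurd hi' (by simp)

theorem conn_aux (k : ℕ) (q : CQ σ n) (E : Set (VarU σ q.Var))
    (t₀ : List (Finset (Atom σ q.Var))) (v₀ : q.Var) (hval : ValidP k q.atoms t₀)
    (hhead : v₀ ∈ headSet t₀) (hbirth : birth t₀ v₀ = t₀)
    (hy : Sum.inl (t₀, v₀) ∈ E) :
    (SimpleGraph.induce
      {t : NodeT k q | Sum.inl (t₀, v₀) ∈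
        {x ∈ E | ∃ v ∈ headSet t.1, x = Sum.inl (birth t.1 v, v)}}
      (treeG k q)).Connected := by
  set Sset : Set (NodeT k q) :=
    {t | Sum.inl (t₀, v₀) ∈ {x ∈ E | ∃ v ∈ headSet t.1, x = Sum.inl (birth t.1 v, v)}}
    with hSset
  have hchar : ∀ t : NodeT k q, t ∈ Sset ↔ v₀ ∈ headSet t.1 ∧ birth t.1 v₀ = t₀ := by
    intro t
    constructor
    · rintro ⟨_, v, hv, heq⟩
      injection heq with h'
      injection h' with h1 h2
      exact ⟨h2 ▸ hv, h2 ▸ h1.symm⟩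
    · rintro ⟨h1, h2⟩
      exact ⟨hy, v₀, h1, by rw [h2]⟩
  have ht₀ : (⟨t₀, hval⟩ : NodeT k q) ∈ Sset := (hchar _).mpr ⟨hhead, hbirth⟩
  have key : ∀ (l : List (Finset (Atom σ q.Var))) (hl : ValidP k q.atoms l)
      (hmem : (⟨l, hl⟩ : NodeT k q) ∈ Sset),
      (SimpleGraph.induce Sset (treeG k q)).Reachable ⟨⟨l, hl⟩, hmem⟩ ⟨⟨t₀, hval⟩, ht₀⟩ := by
    intro l
    induction l with
    | nil =>
      intro hl hmem
      exact absurd ((hchar _).mp hmem).1 (by simp [headSet])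
    | cons S l' ih =>
      intro hl hmem
      obtain ⟨h1, h2⟩ := (hchar _).mp hmem
      by_cases hcase : (S :: l') = t₀
      · have heq2 : (⟨⟨S :: l', hl⟩, hmem⟩ : Sset) = ⟨⟨t₀, hval⟩, ht₀⟩ := by
          apply Subtype.ext; apply Subtype.ext; exact hcase
        rw [heq2]
      · have hmem' : v₀ ∈ headSet l' := by
          by_contra hnot
          rw [birth, if_neg hnot] at h2
          exact hcase h2
        rw [birth, if_pos hmem'] at h2
        have hl' : ValidP k q.atoms l' := fun T hT => hl T (List.mem_cons_of_mem S hT)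
        have hmem'' : (⟨l', hl'⟩ : NodeT k q) ∈ Sset := (hchar _).mpr ⟨hmem', h2⟩
        have hadj : (SimpleGraph.induce Sset (treeG k q)).Adj ⟨⟨S :: l', hl⟩, hmem⟩
            ⟨⟨l', hl'⟩, hmem''⟩ := by
          show (treeG k q).Adj _ _
          exact Or.inr ⟨S, rfl⟩
        exact hadj.reachable.trans (ih hl' hmem'')
  refine @SimpleGraph.Connected.mk _ _ (fun x y' => ?_) ⟨⟨⟨t₀, hval⟩, ht₀⟩⟩
  obtain ⟨⟨lx, hlx⟩, hmx⟩ := x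
  obtain ⟨⟨ly, hly⟩, hmy⟩ := y'
  exact (key lx hlx hmx).trans (key ly hly hmy).symm

theorem unravel_ghw (k : ℕ) (q : CQ σ n) : (unravel k q).ghwLE k := by
  classical
  set E : Set (VarU σ q.Var) := (unravel k q).existVars with hE
  have hE' : ∀ x ∈ E, x ∈ adom (atomsU k q) ∧ x ∉ Set.range (unravel k q).free := by
    intro x hx; exact ⟨hx.1, hx.2⟩
  refine ⟨⟨NodeT k q, treeG k q, ⟨treeG_connected k q, treeG_acyclic k q⟩,
    fun t => {x ∈ E | ∃ v ∈ headSet t.1, x = Sum.inl (birth t.1 v, v)},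
    fun t => Set.sep_subset _ _, ?_, ?_⟩, ?_⟩
  · -- covers
    rintro g ⟨s, hs, f, hf, hsub, rfl⟩
    refine ⟨⟨s, hs⟩, ?_⟩
    rintro x ⟨⟨i, rfl⟩, hxE⟩
    have hx : enc q s (f.args i) ∈ E := hxE
    by_cases hfree : f.args i ∈ Set.range q.free
    · exfalso
      obtain ⟨j, hj⟩ := hfree
      refine (hE' _ hx).2 ⟨j, ?_⟩
      show Sum.inr (q.free j) = _
      rw [hj, enc_free ⟨j, hj⟩]
    · have hmem : f.args i ∈ headSet s := by
        rcases hsub ⟨i, rfl⟩ with h' | h'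
        · exact h'
        · exact absurd h' hfree
      show enc q s (f.args i) ∈ _
      rw [enc_nonfree hfree]
      rw [enc_nonfree hfree] at hx
      exact ⟨hx, f.args i, hmem, rfl⟩
  · -- conn
    intro y hy
    rcases hyv : y with ⟨t₀, v₀⟩ | w
    · subst hyv
      obtain ⟨hnf, hval, hhead, hbirth⟩ := inl_adom (hE' _ hy).1
      exact conn_aux k q E t₀ v₀ hval hhead hbirth hy
    · subst hyv
      obtain ⟨j, hj⟩ := inr_adom (hE' _ hy).1
      exact absurd (hE' _ hy).2 (by
        simp only [not_not]
        exact ⟨j, by show Sum.inr (q.free j) = _; rw [hj]⟩)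
  · -- width
    rintro ⟨s, hval⟩
    cases s with
    | nil =>
      refine ⟨∅, by simp, by simp, ?_⟩
      rintro x ⟨_, v, hv, _⟩
      exact absurd hv (by simp [headSet])
    | cons S s' =>
      refine ⟨S.image (fun f => f.map (enc q (S :: s'))), ?_, ?_, ?_⟩
      · intro g hg
        simp only [Finset.coe_image, Set.mem_image, Finset.mem_coe] at hg
        obtain ⟨f, hf, rfl⟩ := hg
        refine ⟨S :: s', hval, f, (hval S (by simp)).1 hf, ?_, rfl⟩
        intro x hx
        left
        show x ∈ uS S
        exact Set.mem_biUnion hf hx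
      · exact (Finset.card_image_le).trans (hval S (by simp)).2
      · rintro x ⟨hxE, v, hv, rfl⟩
        have hnf : v ∉ Set.range q.free := (inl_adom (hE' _ hxE).1).1
        have hv' : v ∈ uS S := hv
        rw [uS] at hv'
        simp only [Set.mem_iUnion] at hv'
        obtain ⟨f, hf, i, hi⟩ := hv'
        refine Set.mem_biUnion (x := f.map (enc q (S :: s'))) ?_ ?_
        · simp only [Finset.coe_image, Set.mem_image, Finset.mem_coe]
          exact ⟨f, hf, rfl⟩
        · refine ⟨i, ?_⟩
          show enc q (S :: s') (f.args i) = _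
          rw [hi, enc_nonfree hnf]
end Aux3
section Aux4
attribute [local instance] Classical.propDecidable

variable {σ : Schema} {n : ℕ}

theorem partialOk_of_path (k : ℕ) (q : CQ σ n) (D : DB σ ℕ) (a : Fin n → ℕ)
    (g : VarU σ q.Var → ℕ) (hg : IsHom g (atomsU k q) D)
    (hfree : ∀ i, g (Sum.inr (q.free i)) = a i)
    (s : List (Finset (Atom σ q.Var))) (hs : ValidP k q.atoms s)
    (W : Set q.Var) (hW : W ⊆ headSet s ∪ Set.range q.free) :
    PartialOk q.atoms D q.free a W (fun v => g (enc q s v)) := by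
  constructor
  · intro i
    show g (enc q s (q.free i)) = a i
    rw [enc_free ⟨i, rfl⟩]
    exact hfree i
  · intro f hf hrange
    have hrange' : Set.range f.args ⊆ headSet s ∪ Set.range q.free := by
      intro x hx
      rcases hrange hx with h | h
      · exact hW h
      · exact Or.inr h
    have hmem : f.map (enc q s) ∈ atomsU k q := ⟨s, hs, f, hf, hrange', rfl⟩
    have := hg _ hmem
    rwa [Atom.map_map] at this

theorem hom_to_win (k : ℕ) (q : CQ σ n) (D : DB σ ℕ) (a : Fin n → ℕ)
    (g : VarU σ q.Var → ℕ) (hg : IsHom g (atomsU k q) D)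
    (hfree : ∀ i, g (Sum.inr (q.free i)) = a i) :
    PebbleWin k q.atoms q.free D a := by
  refine ⟨{p | ∃ s, ValidP k q.atoms s ∧ p.1 ⊆ headSet s ∪ Set.range q.free ∧
    kCovered k q.atoms p.1 ∧ p.2 = fun v => g (enc q s v)}, ?_, ?_, ?_, ?_⟩
  · exact ⟨fun v => g (enc q [] v), [], ValidP_nil k q.atoms, Set.empty_subset _,
      kCovered_empty k q.atoms, rfl⟩
  · rintro ⟨W, h⟩ ⟨s, hs, hWsub, hWcov, rfl⟩
    exact ⟨hWcov, partialOk_of_path k q D a g hg hfree s hs W hWsub⟩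
  · rintro ⟨W, h⟩ ⟨s, hs, hWsub, hWcov, rfl⟩ c hcov
    obtain ⟨S', hS'sub, hS'card, hins⟩ := hcov
    refine ⟨(insert c W, fun v => g (enc q (S' :: s) v)), ?_, rfl, ?_⟩
    · refine ⟨S' :: s, ?_, ?_, ⟨S', hS'sub, hS'card, hins⟩, rfl⟩
      · intro T hT
        rcases List.mem_cons.mp hT with h' | h'
        · exact h' ▸ ⟨hS'sub, hS'card⟩
        · exact hs T h'
      · intro x hx
        left
        exact hins hx
    · intro x hx
      have hxW : x ∈ W := hx
      show g (enc q (S' :: s) x) = g (enc q s x)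
      by_cases hxf : x ∈ Set.range q.free
      · rw [enc_free hxf, enc_free hxf]
      · have hxh : x ∈ headSet s := by
          rcases hWsub hxW with h' | h'
          · exact h'
          · exact absurd h' hxf
        rw [enc_nonfree hxf, enc_nonfree hxf, birth_cons_of_mem S' hxh]
  · rintro ⟨W, h⟩ ⟨s, hs, hWsub, hWcov, rfl⟩ U hU
    exact ⟨(U, fun v => g (enc q s v)), ⟨s, hs, hU.trans hWsub, kCovered_mono hU hWcov, rfl⟩,
      rfl, fun x _ => rfl⟩

theorem reach_up {σ' : Schema} {α : Type} {k : ℕ} {D : DB σ' α}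
    (F : Set (Set α × (α → ℕ)))
    (hins : ∀ p ∈ F, ∀ c : α, kCovered k D (insert c p.1) →
      ∃ p' ∈ F, p'.1 = insert c p.1 ∧ ∀ x ∈ p.1, p'.2 x = p.2 x) :
    ∀ (N : ℕ) (W : Set α) (h : α → ℕ), (W, h) ∈ F → ∀ U, W ⊆ U → kCovered k D U →
      (U \ W).ncard ≤ N → ∃ h', (U, h') ∈ F ∧ ∀ x ∈ W, h' x = h x := by
  intro N
  induction N with
  | zero =>
    intro W h hWF U hWU hU hcard
    have hUfin : U.Finite := kCovered_finite hU
    have hemp : U \ W = ∅ := by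
      rw [← Set.ncard_eq_zero (hUfin.diff (t := W))]
      omega
    obtain rfl : U = W := Set.Subset.antisymm (Set.diff_eq_empty.mp hemp) hWU
    exact ⟨h, hWF, fun x _ => rfl⟩
  | succ N ih =>
    intro W h hWF U hWU hU hcard
    have hUfin : U.Finite := kCovered_finite hU
    by_cases hUW : U = W
    · subst hUW
      exact ⟨h, hWF, fun x _ => rfl⟩
    · have hne : (U \ W).Nonempty := by
        rw [Set.nonempty_iff_ne_empty]
        intro hemp
        exact hUW (le_antisymm (Set.diff_eq_empty.mp hemp) hWU)
      obtain ⟨c, hc⟩ := hne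
      have hcov : kCovered k D (insert c W) :=
        kCovered_mono (Set.insert_subset hc.1 hWU) hU
      obtain ⟨⟨W2, h2⟩, hF2, hW2, hagr⟩ := hins (W, h) hWF c hcov
      simp only at hW2 hagr
      subst hW2
      have hss : U \ insert c W ⊂ U \ W := by
        constructor
        · exact Set.diff_subset_diff_right (Set.subset_insert c W)
        · intro hsub
          exact (hsub hc).2 (Set.mem_insert c W)
      have hlt : (U \ insert c W).ncard < (U \ W).ncard :=
        Set.ncard_lt_ncard hss (hUfin.diff (t := W))
      obtain ⟨h', hh'F, hh'agr⟩ := ih _ h2 hF2 U (Set.insert_subset (hc.1) hWU) hU (by omega)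
      exact ⟨h', hh'F, fun x hx => (hh'agr x (Set.subset_insert c W hx)).trans (hagr x hx)⟩

noncomputable def Pmap {σ' : Schema} {α : Type} (F : Set (Set α × (α → ℕ))) (h0 : α → ℕ) :
    List (Finset (Atom σ' α)) → (α → ℕ)
  | [] => h0
  | S :: s =>
    if H : ∃ h', (uS S, h') ∈ F ∧ ∀ x ∈ headSet s ∩ uS S, h' x = Pmap F h0 s x then
      H.choose
    else h0

theorem Pmap_mem {σ' : Schema} {α : Type} {k : ℕ} {A : DB σ' α}
    (F : Set (Set α × (α → ℕ))) (h0 : α → ℕ)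
    (h0F : (∅, h0) ∈ F)
    (hins : ∀ p ∈ F, ∀ c : α, kCovered k A (insert c p.1) →
      ∃ p' ∈ F, p'.1 = insert c p.1 ∧ ∀ x ∈ p.1, p'.2 x = p.2 x)
    (hsub : ∀ p ∈ F, ∀ U, U ⊆ p.1 → ∃ p' ∈ F, p'.1 = U ∧ ∀ x ∈ U, p'.2 x = p.2 x) :
    ∀ s : List (Finset (Atom σ' α)), ValidP k A s →
      ((headSet s, Pmap F h0 s) ∈ F ∧
        ∀ (S) (s'), s = S :: s' → ∀ x ∈ headSet s' ∩ uS S, Pmap F h0 s x = Pmap F h0 s' x) := by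
  intro s
  induction s with
  | nil =>
    intro _
    refine ⟨h0F, ?_⟩
    intro S s' h
    simp at h
  | cons S s ih =>
    intro hval
    have hvs : ValidP k A s := fun T hT => hval T (List.mem_cons_of_mem S hT)
    have hP := (ih hvs).1
    obtain ⟨⟨W1, h1⟩, hF1, hW1, hagr1⟩ :=
      hsub _ hP (headSet s ∩ uS S) Set.inter_subset_left
    simp only at hW1 hagr1
    subst hW1
    have hcovS : kCovered k A (uS S) :=
      kCovered_uS (hval S (by simp)).1 (hval S (by simp)).2
    obtain ⟨h', hh'F, hh'agr⟩ := reach_up F hins ((uS S \ (headSet s ∩ uS S)).ncard)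
      _ h1 hF1 (uS S) Set.inter_subset_right hcovS le_rfl
    have H : ∃ h', (uS S, h') ∈ F ∧ ∀ x ∈ headSet s ∩ uS S, h' x = Pmap F h0 s x :=
      ⟨h', hh'F, fun x hx => (hh'agr x hx).trans (hagr1 x hx)⟩
    have heq : Pmap F h0 (S :: s) = H.choose := by
      simp only [Pmap, dif_pos H]
    refine ⟨?_, ?_⟩
    · rw [heq]
      exact H.choose_spec.1
    · intro S' s'' hcons
      injection hcons with hS hs'
      subst hS; subst hs'
      intro x hx
      rw [heq]
      exact H.choose_spec.2 x hx

theorem Pmap_birth {σ' : Schema} {α : Type} {k : ℕ} {A : DB σ' α}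
    (F : Set (Set α × (α → ℕ))) (h0 : α → ℕ)
    (h0F : (∅, h0) ∈ F)
    (hins : ∀ p ∈ F, ∀ c : α, kCovered k A (insert c p.1) →
      ∃ p' ∈ F, p'.1 = insert c p.1 ∧ ∀ x ∈ p.1, p'.2 x = p.2 x)
    (hsub : ∀ p ∈ F, ∀ U, U ⊆ p.1 → ∃ p' ∈ F, p'.1 = U ∧ ∀ x ∈ U, p'.2 x = p.2 x) :
    ∀ s : List (Finset (Atom σ' α)), ValidP k A s →
      ∀ v ∈ headSet s, Pmap F h0 (birth s v) v = Pmap F h0 s v := by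
  intro s
  induction s with
  | nil =>
    intro _ v hv
    exact absurd hv (by simp [headSet])
  | cons S s ih =>
    intro hval v hv
    have hvs : ValidP k A s := fun T hT => hval T (List.mem_cons_of_mem S hT)
    by_cases hm : v ∈ headSet s
    · rw [birth_cons_of_mem S hm]
      have h1 : Pmap F h0 (S :: s) v = Pmap F h0 s v :=
        (Pmap_mem F h0 h0F hins hsub (S :: s) hval).2 S s rfl v ⟨hm, hv⟩
      rw [h1]
      exact ih hvs v hm
    · rw [birth, if_neg hm]

theorem win_to_hom (k : ℕ) (q : CQ σ n) (D : DB σ ℕ) (a : Fin n → ℕ)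
    (hwin : PebbleWin k q.atoms q.free D a) :
    ∃ h : VarU σ q.Var → ℕ, IsHom h (atomsU k q) D ∧ ∀ i, h (Sum.inr (q.free i)) = a i := by
  obtain ⟨F, ⟨h0, h0F⟩, hpo, hins, hsub⟩ := hwin
  refine ⟨fun x => match x with
    | Sum.inl (t, v) => Pmap F h0 t v
    | Sum.inr v => h0 v, ?_, ?_⟩
  · rintro g' ⟨s, hs, f, hf, hrange, rfl⟩
    have hPF : (headSet s, Pmap F h0 s) ∈ F := (Pmap_mem F h0 h0F hins hsub s hs).1
    have hpo2 : PartialOk q.atoms D q.free a (headSet s) (Pmap F h0 s) := (hpo _ hPF).2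
    have h0po : PartialOk q.atoms D q.free a ∅ h0 := (hpo _ h0F).2
    have key : ∀ x ∈ Set.range f.args,
        (fun y => match y with
          | Sum.inl (t, v) => Pmap F h0 t v
          | Sum.inr v => h0 v) (enc q s x) = Pmap F h0 s x := by
      intro x hx
      by_cases hxf : x ∈ Set.range q.free
      · rw [enc_free hxf]
        obtain ⟨i, rfl⟩ := hxf
        show h0 (q.free i) = _
        rw [h0po.1 i, hpo2.1 i]
      · rw [enc_nonfree hxf]
        show Pmap F h0 (birth s x) x = _
        have hxh : x ∈ headSet s := by
          rcases hrange hx with h' | h'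
          · exact h'
          · exact absurd h' hxf
        exact Pmap_birth F h0 h0F hins hsub s hs x hxh
    rw [Atom.map_map, Atom.map_congr key]
    exact hpo2.2 f hf hrange
  · intro i
    have h0po : PartialOk q.atoms D q.free a ∅ h0 := (hpo _ h0F).2
    show h0 (q.free i) = a i
    exact h0po.1 i

end Aux4
/-- For every CQ `q` there is a (possibly infinite) `q' ∈ GHW(k)^∞` such that
for every (even countably infinite) database `D` and tuple `a` of constants of
`D`: `a ∈ q'(D)` iff `(q', x̄') → (D, a)` iff `(q, x̄) →_k (D, a)`. -/
theorem statement6 (σ : Schema) (k : ℕ) (hk : 1 ≤ k) (n : ℕ) (q : CQ σ n) :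
    ∃ q' : CQI σ n, q'.ghwLE k ∧
      ∀ D : DB σ ℕ, D.Countable → ∀ a : Fin n → ℕ, (∀ i, a i ∈ adom D) →
        ((a ∈ q'.eval D ↔ HomTup q'.atoms q'.free D a) ∧
         (HomTup q'.atoms q'.free D a ↔ PebbleWin k q.atoms q.free D a)) := by
  refine ⟨unravel k q, unravel_ghw k q, ?_⟩
  intro D _hD a ha
  refine ⟨⟨fun h => h.2, fun h => ⟨ha, h⟩⟩, ⟨?_, ?_⟩⟩
  · rintro ⟨g, hg, hfree⟩
    exact hom_to_win k q D a g hg hfree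
  · intro hwin
    exact win_to_hom k q D a hwin
end

section
/- Fix k ≥ 1 and let D and D' be (possibly countably infinite) databases with tuples ā in D and b̄ in D'. Then (D, ā) →_k (D', b̄) if and only if for every CQ q(x̄) in GHW(k)^∞, (q, x̄) → (D, ā) implies (q, x̄) → (D', b̄). -/
namespace CQAux


open SimpleGraph

/-- The tree on lists where `l` is adjacent to `S :: l`. -/
def consGraph (γ : Type) : SimpleGraph (List γ) where
  Adj l l' := (∃ S, l' = S :: l) ∨ (∃ S, l = S :: l')
  symm := ⟨fun l l' h => Or.symm h⟩
  loopless := by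
    constructor
    rintro l (⟨S, h⟩ | ⟨S, h⟩) <;> simpa using congrArg List.length h

lemma consGraph_adj_cons {γ : Type} (S : γ) (l : List γ) :
    (consGraph γ).Adj (S :: l) l := Or.inr ⟨S, rfl⟩

lemma consGraph_reachable_nil {γ : Type} (l : List γ) :
    (consGraph γ).Reachable l [] := by
  induction l with
  | nil => exact Reachable.refl _
  | cons S l ih => exact ((consGraph_adj_cons S l).reachable).trans ih

lemma consGraph_connected (γ : Type) : (consGraph γ).Connected := by
  rw [connected_iff]
  exact ⟨fun l l' => (consGraph_reachable_nil l).trans (consGraph_reachable_nil l').symm, ⟨[]⟩⟩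

lemma consGraph_peak {γ : Type} (u : List γ) (c : (consGraph γ).Walk u u)
    (hc : c.IsCycle) (hmax : ∀ x ∈ c.support, x.length ≤ u.length) : False := by
  cases c with
  | nil => exact hc.ne_nil rfl
  | @cons _ v _ h p =>
    -- v is u.tail
    have hvmem : v ∈ (Walk.cons h p).support := by
      simp [Walk.support_cons, Walk.start_mem_support]
    have hv : ∃ S, u = S :: v := by
      rcases h with ⟨S, hS⟩ | hS
      · exfalso
        have := hmax v hvmem
        simp [hS] at this
      · exact hS
    obtain ⟨S, hS⟩ := hv
    -- reverse
    cases hr : (Walk.cons h p).reverse with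
    | nil =>
      exfalso
      have := congrArg Walk.reverse hr
      rw [Walk.reverse_reverse] at this
      simp at this
    | @cons _ v₂ _ h₂ p₂ =>
      have hv2mem : v₂ ∈ (Walk.cons h p).support := by
        have : v₂ ∈ ((Walk.cons h p).reverse).support := by
          rw [hr]; simp [Walk.support_cons, Walk.start_mem_support]
        rwa [Walk.support_reverse, List.mem_reverse] at this
      have hv2 : v₂ = v := by
        rcases h₂ with ⟨S₂, hS₂⟩ | ⟨S₂, hS₂⟩
        · exfalso
          have := hmax v₂ hv2mem
          simp [hS₂] at this
        · rw [hS₂] at hS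
          exact (List.cons_eq_cons.mp hS.symm).2.symm
      -- edge list equation
      have hedges : s(u, v₂) :: p₂.edges = p.edges.reverse ++ [s(u, v)] := by
        have e1 : ((Walk.cons h p).reverse).edges = (Walk.cons h₂ p₂).edges := by rw [hr]
        rw [Walk.edges_reverse, Walk.edges_cons, Walk.edges_cons] at e1
        rw [← e1, List.reverse_cons]
      have hpne : p.edges ≠ [] := by
        cases p with
        | nil => exact absurd rfl h.ne
        | cons h₃ p₃ => simp [Walk.edges_cons]
      have hmem : s(u, v) ∈ p.edges := by
        have hhead := congrArg List.head? hedges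
        rw [List.head?_cons, List.head?_append_of_ne_nil] at hhead
        · rw [List.head?_reverse] at hhead
          rw [hv2] at hhead
          have hmem' : s(u, v) ∈ p.edges.getLast? := by
            rw [Option.mem_def]; exact hhead.symm
          obtain ⟨h', heq⟩ := List.mem_getLast?_eq_getLast hmem'
          rw [heq]
          exact List.getLast_mem h'
        · simpa using hpne
      have hnodup : ((Walk.cons h p).edges).Nodup := hc.isCircuit.isTrail.edges_nodup
      rw [Walk.edges_cons] at hnodup
      exact (List.nodup_cons.mp hnodup).1 hmem

lemma consGraph_isAcyclic (γ : Type) : (consGraph γ).IsAcyclic := by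
  intro v c hc
  classical
  have hne : c.support.toFinset.Nonempty := by
    simp [List.toFinset_nonempty_iff, Walk.support_ne_nil]
  obtain ⟨u, hu_mem, hmaxF⟩ := c.support.toFinset.exists_max_image List.length hne
  rw [List.mem_toFinset] at hu_mem
  have hmax : ∀ x ∈ (c.rotate u hu_mem).support, x.length ≤ u.length := by
    intro x hx
    have hx' : x ∈ c.support := by
      rw [Walk.mem_support_iff] at hx
      rcases hx with rfl | hx
      · exact hu_mem
      · have hrot := Walk.support_rotate c u hu_mem
        have : x ∈ c.support.tail := (hrot.mem_iff).mp hx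
        exact List.mem_of_mem_tail this
    exact hmaxF x (List.mem_toFinset.mpr hx')
  exact consGraph_peak u (c.rotate u hu_mem) (hc.rotate hu_mem) hmax

lemma consGraph_isTree (γ : Type) : (consGraph γ).IsTree :=
  ⟨consGraph_connected γ, consGraph_isAcyclic γ⟩



open SimpleGraph

variable {V α β : Type}

/-- Recursively chosen positions along a walk to the root `t₀`. -/
noncomputable def posAux (T : SimpleGraph V) (B : V → Set α)
    (F : Set (Set α × (α → β)))
    (hstart : ∀ t, ∃ p ∈ F, p.1 = B t)
    (hstep : ∀ t u, T.Adj t u → ∀ p ∈ F, p.1 = B u →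
      ∃ p' ∈ F, p'.1 = B t ∧ ∀ x ∈ B t ∩ B u, p'.2 x = p.2 x)
    (t₀ : V) : ∀ {t : V}, T.Walk t t₀ → {p : Set α × (α → β) // p ∈ F ∧ p.1 = B t}
  | _, .nil => ⟨(hstart t₀).choose, (hstart t₀).choose_spec.1, (hstart t₀).choose_spec.2⟩
  | _, @Walk.cons _ _ t u _ h w =>
      let prev := posAux T B F hstart hstep t₀ w
      ⟨(hstep t u h prev.1 prev.2.1 prev.2.2).choose,
       (hstep t u h prev.1 prev.2.1 prev.2.2).choose_spec.1,
       (hstep t u h prev.1 prev.2.1 prev.2.2).choose_spec.2.1⟩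

lemma posAux_cons (T : SimpleGraph V) (B : V → Set α)
    (F : Set (Set α × (α → β)))
    (hstart : ∀ t, ∃ p ∈ F, p.1 = B t)
    (hstep : ∀ t u, T.Adj t u → ∀ p ∈ F, p.1 = B u →
      ∃ p' ∈ F, p'.1 = B t ∧ ∀ x ∈ B t ∩ B u, p'.2 x = p.2 x)
    (t₀ : V) {t u : V} (h : T.Adj t u) (w : T.Walk u t₀) :
    ∀ x ∈ B t ∩ B u,
      ((posAux T B F hstart hstep t₀ (Walk.cons h w)) : {p // p ∈ F ∧ p.1 = B t}).1.2 x
        = (posAux T B F hstart hstep t₀ w).1.2 x := by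
  intro x hx
  have hred : ((posAux T B F hstart hstep t₀ (Walk.cons h w)) : {p // p ∈ F ∧ p.1 = B t}).1
      = (hstep t u h (posAux T B F hstart hstep t₀ w).1
          (posAux T B F hstart hstep t₀ w).2.1
          (posAux T B F hstart hstep t₀ w).2.2).choose := by
    rw [posAux]
  rw [hred]
  exact (hstep t u h (posAux T B F hstart hstep t₀ w).1
      (posAux T B F hstart hstep t₀ w).2.1
      (posAux T B F hstart hstep t₀ w).2.2).choose_spec.2.2 x hx

/-- Glue positions consistently along a tree. -/
lemma tree_glue (T : SimpleGraph V) (hT : T.IsTree) (B : V → Set α)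
    (F : Set (Set α × (α → β)))
    (hstart : ∀ t, ∃ p ∈ F, p.1 = B t)
    (hstep : ∀ t u, T.Adj t u → ∀ p ∈ F, p.1 = B u →
      ∃ p' ∈ F, p'.1 = B t ∧ ∀ x ∈ B t ∩ B u, p'.2 x = p.2 x) :
    ∃ P : V → Set α × (α → β),
      (∀ t, P t ∈ F ∧ (P t).1 = B t) ∧
      ∀ t u, T.Adj t u → ∀ x ∈ B t ∩ B u, (P t).2 x = (P u).2 x := by
  classical
  have hconn := hT.isConnected
  obtain ⟨t₀⟩ := hconn.nonempty
  have huniq : ∀ ⦃v w : V⦄ (p q : T.Path v w), p = q :=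
    isAcyclic_iff_path_unique.mp hT.IsAcyclic
  let pathP : ∀ t, T.Path t t₀ := fun t => ((hconn t t₀).some).toPath
  let P : ∀ t, Set α × (α → β) := fun t => (posAux T B F hstart hstep t₀ (pathP t).1).1
  refine ⟨P, fun t => ⟨(posAux T B F hstart hstep t₀ (pathP t).1).2.1,
    (posAux T B F hstart hstep t₀ (pathP t).1).2.2⟩, ?_⟩
  have main : ∀ t u (h : T.Adj t u), (pathP t).1 = Walk.cons h (pathP u).1 →
      ∀ x ∈ B t ∩ B u, (P t).2 x = (P u).2 x := by
    intro t u h heq x hx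
    show (posAux T B F hstart hstep t₀ (pathP t).1).1.2 x = _
    rw [heq]
    exact posAux_cons T B F hstart hstep t₀ h (pathP u).1 x hx
  have cases : ∀ t u (h : T.Adj t u),
      (pathP t).1 = Walk.cons h (pathP u).1 ∨ (pathP u).1 = Walk.cons h.symm (pathP t).1 := by
    intro t u h
    by_cases hmem : u ∈ (pathP t).1.support
    · left
      have hTake : ((pathP t).1.takeUntil u hmem) = Walk.cons h Walk.nil := by
        have pa : ((pathP t).1.takeUntil u hmem).IsPath := (pathP t).2.takeUntil hmem
        have pb : (Walk.cons h (Walk.nil : T.Walk u u)).IsPath := by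
          rw [Walk.cons_isPath_iff]
          exact ⟨Walk.IsPath.nil, by simp [h.ne]⟩
        exact congrArg Subtype.val (huniq ⟨_, pa⟩ ⟨_, pb⟩)
      have hDrop : ((pathP t).1.dropUntil u hmem) = (pathP u).1 := by
        have pa : ((pathP t).1.dropUntil u hmem).IsPath := (pathP t).2.dropUntil hmem
        exact congrArg Subtype.val (huniq ⟨_, pa⟩ (pathP u))
      have := Walk.take_spec (pathP t).1 hmem
      rw [hTake, hDrop] at this
      rw [← this]
      simp [Walk.cons_append]
    · right
      have pb : (Walk.cons h.symm (pathP t).1).IsPath := by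
        rw [Walk.cons_isPath_iff]
        exact ⟨(pathP t).2, hmem⟩
      exact congrArg Subtype.val (huniq (pathP u) ⟨_, pb⟩)
  intro t u h x hx
  rcases cases t u h with heq | heq
  · exact main t u h heq x hx
  · exact (main u t h.symm heq x ⟨hx.2, hx.1⟩).symm


section Forward

variable {σ : Schema} {k n : ℕ}

lemma Atom.map_map {α β γ : Type} (h : α → β) (g : β → γ) (f : Atom σ α) :
    (f.map h).map g = f.map (g ∘ h) := rfl

lemma kCovered_mono {α : Type} {k : ℕ} {D : DB σ α} {U W : Set α}
    (h : kCovered k D U) (hsub : W ⊆ U) : kCovered k D W := by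
  obtain ⟨S, h1, h2, h3⟩ := h
  exact ⟨S, h1, h2, hsub.trans h3⟩

lemma kCovered_finite {α : Type} {k : ℕ} {D : DB σ α} {U : Set α}
    (h : kCovered k D U) : U.Finite := by
  obtain ⟨S, _, _, h3⟩ := h
  refine Set.Finite.subset ?_ h3
  exact (S : Set (Atom σ α)).toFinite.biUnion (fun f _ => Set.finite_range f.args)

/-- From a position in a winning family, grow the pebbled set to any finite
`k`-covered superset. -/
lemma grow {α β : Type} {D : DB σ α} {F : Set (Set α × (α → β))}
    (hIns : ∀ p ∈ F, ∀ c : α, kCovered k D (insert c p.1) →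
      ∃ p' ∈ F, p'.1 = insert c p.1 ∧ ∀ x ∈ p.1, p'.2 x = p.2 x) :
    ∀ (m : ℕ) (p : Set α × (α → β)), p ∈ F → ∀ (W : Set α), W.Finite → p.1 ⊆ W →
      kCovered k D W → (W \ p.1).ncard ≤ m →
      ∃ p' ∈ F, p'.1 = W ∧ ∀ x ∈ p.1, p'.2 x = p.2 x := by
  intro m
  induction m with
  | zero =>
    intro p hp W hWf hsub hcov hcard
    have hempty : W \ p.1 = ∅ := by
      rw [← Set.ncard_eq_zero (hWf.diff)]
      omega
    have : W = p.1 := (Set.diff_eq_empty.mp hempty).antisymm hsub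
    exact ⟨p, hp, this.symm, fun x _ => rfl⟩
  | succ m ih =>
    intro p hp W hWf hsub hcov hcard
    by_cases hempty : W \ p.1 = ∅
    · have : W = p.1 := (Set.diff_eq_empty.mp hempty).antisymm hsub
      exact ⟨p, hp, this.symm, fun x _ => rfl⟩
    · obtain ⟨c, hc⟩ := Set.nonempty_iff_ne_empty.mpr hempty
      have hins : insert c p.1 ⊆ W := Set.insert_subset hc.1 hsub
      obtain ⟨p₁, hp₁, hp₁1, hp₁agree⟩ := hIns p hp c (kCovered_mono hcov hins)
      have hcard' : (W \ p₁.1).ncard ≤ m := by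
        rw [hp₁1]
        have h1 : W \ insert c p.1 = (W \ p.1) \ {c} := by
          ext x; simp [Set.mem_diff, Set.mem_insert_iff]; tauto
        rw [h1]
        have h2 := Set.ncard_diff_singleton_add_one hc (hWf.diff)
        omega
      obtain ⟨p₂, hp₂, hp₂1, hp₂agree⟩ := ih p₁ hp₁ W hWf (hp₁1 ▸ hins) hcov hcard'
      refine ⟨p₂, hp₂, hp₂1, fun x hx => ?_⟩
      rw [hp₂agree x (by rw [hp₁1]; exact Set.mem_insert_of_mem c hx), hp₁agree x hx]

/-- The forward direction: a winning Duplicator strategy transfers homomorphisms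
of every `GHW(k)^∞` query. -/
lemma forward {D D' : DB σ ℕ} {a : Fin n → ℕ} {b : Fin n → ℕ}
    (hwin : PebbleWin k D a D' b) (q : CQI σ n) (hq : q.ghwLE k)
    (hhom : HomTup q.atoms q.free D a) : HomTup q.atoms q.free D' b := by
  classical
  obtain ⟨F, ⟨h₀, h₀F⟩, hOk, hIns, hDel⟩ := hwin
  obtain ⟨td, hwid⟩ := hq
  obtain ⟨g, hgH, hgF⟩ := hhom
  set B : td.node → Set ℕ := fun t => g '' td.bag t with hB
  have hBcov : ∀ t, kCovered k D (B t) := by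
    intro t
    obtain ⟨S, hS1, hS2, hS3⟩ := hwid t
    refine ⟨S.image (Atom.map g), ?_, le_trans (Finset.card_image_le) hS2, ?_⟩
    · intro A hA
      simp only [Finset.coe_image, Set.mem_image] at hA
      obtain ⟨f, hf, rfl⟩ := hA
      exact hgH f (hS1 hf)
    · rintro x ⟨v, hv, rfl⟩
      have := hS3 hv
      simp only [Set.mem_iUnion] at this ⊢
      obtain ⟨f, hf, j, hj⟩ := this
      exact ⟨f.map g, by simp only [Finset.coe_image, Set.mem_image]; exact ⟨f, hf, rfl⟩,
        j, by simp [Atom.map, hj]⟩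
  have hBfin : ∀ t, (B t).Finite := fun t => kCovered_finite (hBcov t)
  have hstart : ∀ t, ∃ p ∈ F, p.1 = B t := by
    intro t
    obtain ⟨p', hp', h1, _⟩ := grow hIns (B t \ (∅ : Set ℕ)).ncard
      (∅, h₀) h₀F (B t) (hBfin t) (Set.empty_subset _) (hBcov t) le_rfl
    exact ⟨p', hp', h1⟩
  have hstep : ∀ t u, td.T.Adj t u → ∀ p ∈ F, p.1 = B u →
      ∃ p' ∈ F, p'.1 = B t ∧ ∀ x ∈ B t ∩ B u, p'.2 x = p.2 x := by
    intro t u _ p hp hp1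
    obtain ⟨p₁, hp₁, hp₁1, hp₁a⟩ := hDel p hp (B t ∩ B u)
      (by rw [hp1]; exact Set.inter_subset_right)
    obtain ⟨p₂, hp₂, hp₂1, hp₂a⟩ := grow hIns ((B t) \ p₁.1).ncard p₁ hp₁ (B t)
      (hBfin t) (by rw [hp₁1]; exact Set.inter_subset_left) (hBcov t) le_rfl
    refine ⟨p₂, hp₂, hp₂1, fun x hx => ?_⟩
    rw [hp₂a x (by rw [hp₁1]; exact hx), hp₁a x hx]
  obtain ⟨P, hPmem, hPadj⟩ := tree_glue td.T td.isTree B F hstart hstep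
  -- constancy on connected bag sets
  have const : ∀ (y : q.Var), y ∈ q.existVars → ∀ t t', y ∈ td.bag t → y ∈ td.bag t' →
      (P t).2 (g y) = (P t').2 (g y) := by
    intro y hy t t' ht ht'
    have hcon := td.conn y hy
    have walkagree : ∀ (x z : {s | y ∈ td.bag s}) (w : (SimpleGraph.induce {s | y ∈ td.bag s} td.T).Walk x z),
        (P x.1).2 (g y) = (P z.1).2 (g y) := by
      intro x z w
      induction w with
      | nil => rfl
      | cons hadj w ih =>
        rename_i s₁ s₂ _
        have hadj' : td.T.Adj s₁.1 s₂.1 := hadj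
        have := hPadj s₁.1 s₂.1 hadj' (g y) ⟨⟨y, s₁.2, rfl⟩, ⟨y, s₂.2, rfl⟩⟩
        rw [this, ih]
    exact (hcon ⟨t, ht⟩ ⟨t', ht'⟩).elim (fun w => walkagree ⟨t, ht⟩ ⟨t', ht'⟩ w)
  obtain ⟨t₀⟩ := td.isTree.isConnected.nonempty
  have hnode : ∀ v (hv : v ∈ q.existVars), ∃ t, v ∈ td.bag t := by
    intro v hv
    obtain ⟨⟨t, ht⟩⟩ := (td.conn v hv).nonempty
    exact ⟨t, ht⟩
  set hfun : q.Var → ℕ := fun v =>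
    if hv : v ∈ q.existVars then (P (hnode v hv).choose).2 (g v) else (P t₀).2 (g v) with hfundef
  have hfree_val : ∀ (t : td.node) (i : Fin n), (P t).2 (a i) = b i := by
    intro t i
    exact (hOk (P t) (hPmem t).1).2.1 i
  refine ⟨hfun, ?_, ?_⟩
  · -- IsHom
    intro f hf
    obtain ⟨tstar, hcov⟩ := td.covers f hf
    have hval : ∀ j, hfun (f.args j) = (P tstar).2 (g (f.args j)) := by
      intro j
      by_cases hv : f.args j ∈ q.existVars
      · rw [hfundef]
        simp only [dif_pos hv]
        exact const (f.args j) hv _ tstar ((hnode (f.args j) hv).choose_spec)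
          (hcov ⟨⟨j, rfl⟩, hv⟩)
      · rw [hfundef]
        simp only [dif_neg hv]
        have hadom : f.args j ∈ adom q.atoms := by
          simp only [adom, Set.mem_iUnion]
          exact ⟨f, hf, ⟨j, rfl⟩⟩
        have hvfree : f.args j ∈ Set.range q.free := by
          by_contra hcon
          exact hv ⟨hadom, hcon⟩
        obtain ⟨i, hi⟩ := hvfree
        rw [← hi, hgF i, hfree_val t₀ i, hfree_val tstar i]
    have hmem : (f.map g).map (P tstar).2 ∈ D' := by
      refine (hOk (P tstar) (hPmem tstar).1).2.2 (f.map g) (hgH f hf) ?_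
      rintro x ⟨j, hj⟩
      have hxj : x = g (f.args j) := hj.symm
      by_cases hv : f.args j ∈ q.existVars
      · left
        rw [(hPmem tstar).2, hB]
        exact ⟨f.args j, hcov ⟨⟨j, rfl⟩, hv⟩, hxj.symm⟩
      · right
        have hadom : f.args j ∈ adom q.atoms := by
          simp only [adom, Set.mem_iUnion]
          exact ⟨f, hf, ⟨j, rfl⟩⟩
        have hvfree : f.args j ∈ Set.range q.free := by
          by_contra hcon
          exact hv ⟨hadom, hcon⟩
        obtain ⟨i, hi⟩ := hvfree
        exact ⟨i, by rw [hxj, ← hi, hgF i]⟩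
    have : f.map hfun = (f.map g).map (P tstar).2 := by
      simp only [Atom.map]
      congr 1
      funext j
      exact hval j
    rw [this]
    exact hmem
  · -- free variables
    intro i
    have hnf : q.free i ∉ q.existVars := fun h => h.2 ⟨i, rfl⟩
    rw [hfundef]
    simp only [dif_neg hnf]
    rw [hgF i]
    exact hfree_val t₀ i

end Forward

section Backward

open scoped Classical

variable {σ : Schema} {k n : ℕ}

/-- The set of database elements exposed at a node of the unraveling. -/
def setU : List (Finset (Atom σ ℕ)) → Set ℕ
  | [] => ∅
  | S :: _ => ⋃ f ∈ (S : Set (Atom σ ℕ)), Set.range f.args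

/-- A node of the unraveling is good if all its labels are sets of at most `k`
atoms of `D`. -/
def goodL (D : DB σ ℕ) (k : ℕ) (l : List (Finset (Atom σ ℕ))) : Prop :=
  ∀ S ∈ l, (S : Set (Atom σ ℕ)) ⊆ D ∧ S.card ≤ k

lemma goodL_nil {D : DB σ ℕ} : goodL D k [] := by intro S hS; simp at hS

lemma goodL_tail {D : DB σ ℕ} {S : Finset (Atom σ ℕ)} {l : List (Finset (Atom σ ℕ))}
    (h : goodL D k (S :: l)) : goodL D k l := fun T hT => h T (List.mem_cons_of_mem S hT)

/-- Canonical representative of the variable for element `c` at node `l`. -/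
noncomputable def repU : List (Finset (Atom σ ℕ)) → ℕ → List (Finset (Atom σ ℕ)) × ℕ
  | [], c => ([], c)
  | S :: m, c => if c ∈ setU m then repU m c else (S :: m, c)

lemma repU_snd (l : List (Finset (Atom σ ℕ))) (c : ℕ) : (repU l c).2 = c := by
  induction l with
  | nil => rfl
  | cons S m ih =>
    rw [repU]
    split
    · exact ih
    · rfl

lemma repU_cons_mem {S : Finset (Atom σ ℕ)} {m : List (Finset (Atom σ ℕ))} {c : ℕ}
    (h : c ∈ setU m) : repU (S :: m) c = repU m c := by rw [repU, if_pos h]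

lemma repU_cons_notmem {S : Finset (Atom σ ℕ)} {m : List (Finset (Atom σ ℕ))} {c : ℕ}
    (h : c ∉ setU m) : repU (S :: m) c = (S :: m, c) := by rw [repU, if_neg h]

lemma repU_idem {l : List (Finset (Atom σ ℕ))} {c : ℕ} (h : c ∈ setU l) :
    repU (repU l c).1 c = repU l c := by
  induction l with
  | nil => simp [setU] at h
  | cons S m ih =>
    by_cases hm : c ∈ setU m
    · rw [repU_cons_mem hm]; exact ih hm
    · rw [repU_cons_notmem hm]; exact repU_cons_notmem hm

lemma repU_fst_setU {l : List (Finset (Atom σ ℕ))} {c : ℕ} (h : c ∈ setU l) :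
    c ∈ setU (repU l c).1 := by
  induction l with
  | nil => simp [setU] at h
  | cons S m ih =>
    by_cases hm : c ∈ setU m
    · rw [repU_cons_mem hm]; exact ih hm
    · rw [repU_cons_notmem hm]; exact h

lemma repU_fst_good {D : DB σ ℕ} {l : List (Finset (Atom σ ℕ))} {c : ℕ}
    (hg : goodL D k l) : goodL D k (repU l c).1 := by
  induction l with
  | nil => exact hg
  | cons S m ih =>
    by_cases hm : c ∈ setU m
    · rw [repU_cons_mem hm]; exact ih (goodL_tail hg)
    · rw [repU_cons_notmem hm]; exact hg

/-- Variables of the unraveling. -/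
abbrev UVar (σ : Schema) (n : ℕ) : Type := (Fin n) ⊕ (List (Finset (Atom σ ℕ)) × ℕ)

/-- Encoding database elements as variables at a node. -/
noncomputable def enc (a : Fin n → ℕ) (l : List (Finset (Atom σ ℕ))) (c : ℕ) : UVar σ n :=
  if hc : c ∈ Set.range a then Sum.inl hc.choose else Sum.inr (repU l c)

lemma enc_notmem {a : Fin n → ℕ} {l : List (Finset (Atom σ ℕ))} {c : ℕ}
    (hc : c ∉ Set.range a) : enc a l c = Sum.inr (repU l c) := dif_neg hc

/-- Atoms of the unraveling of `(D, a)`. -/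
def uAtoms (D : DB σ ℕ) (k : ℕ) (a : Fin n → ℕ) : DB σ (UVar σ n) :=
  {A | ∃ l f, goodL D k l ∧ f ∈ D ∧ Set.range f.args ⊆ setU l ∪ Set.range a ∧
    A = f.map (enc a l)}

lemma atom_countable (σ : Schema) : Countable (Atom σ ℕ) := by
  haveI := σ.rel_finite
  have hli : Function.LeftInverse
      (fun p : Σ r : σ.Rel, (Fin (σ.arity r) → ℕ) => (⟨p.1, p.2⟩ : Atom σ ℕ))
      (fun A : Atom σ ℕ => (⟨A.rel, A.args⟩ : Σ r : σ.Rel, (Fin (σ.arity r) → ℕ))) :=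
    fun A => rfl
  exact hli.injective.countable

lemma uAtoms_countable (D : DB σ ℕ) (k : ℕ) (a : Fin n → ℕ) : (uAtoms D k a).Countable := by
  haveI := atom_countable σ
  have hsub : uAtoms D k a ⊆ Set.range
      (fun p : List (Finset (Atom σ ℕ)) × Atom σ ℕ => p.2.map (enc a p.1)) := by
    rintro A ⟨l, f, _, _, _, rfl⟩
    exact ⟨(l, f), rfl⟩
  exact (Set.countable_range _).mono hsub

/-- The unraveling of `(D, a)` as a possibly infinite CQ. -/
noncomputable def qStar (D : DB σ ℕ) (k : ℕ) (a : Fin n → ℕ) : CQI σ n :=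
  ⟨UVar σ n, uAtoms D k a, Sum.inl, uAtoms_countable D k a⟩

/-- The decoding map: a homomorphism from the unraveling to `(D, a)`. -/
def decU (a : Fin n → ℕ) : UVar σ n → ℕ := Sum.elim a (fun p => p.2)

lemma decU_enc (a : Fin n → ℕ) (l : List (Finset (Atom σ ℕ))) (c : ℕ) :
    decU a (enc a l c) = c := by
  by_cases hc : c ∈ Set.range a
  · rw [enc, dif_pos hc]
    exact hc.choose_spec
  · rw [enc, dif_neg hc]
    exact repU_snd l c

lemma qStar_hom (D : DB σ ℕ) (k : ℕ) (a : Fin n → ℕ) :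
    HomTup (qStar D k a (σ := σ)).atoms (qStar D k a (σ := σ)).free D a := by
  refine ⟨decU a, ?_, fun i => rfl⟩
  rintro A ⟨l, f, _, hfD, _, rfl⟩
  have : (f.map (enc a l)).map (decU a) = f := by
    simp only [Atom.map]
    congr 1
    · funext j
      exact decU_enc a l (f.args j)
  erw [this]
  exact hfD

lemma qStar_ghw (D : DB σ ℕ) (k : ℕ) (a : Fin n → ℕ) : (qStar D k a (σ := σ)).ghwLE k := by
  classical
  refine ⟨⟨List (Finset (Atom σ ℕ)), consGraph _, consGraph_isTree _,
    fun l => {v : UVar σ n | goodL D k l ∧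
      ∃ c, c ∈ setU l ∧ c ∉ Set.range a ∧ v = Sum.inr (repU l c)} ∩
      (qStar D k a (σ := σ)).existVars,
    fun t => Set.inter_subset_right, ?_, ?_⟩, ?_⟩
  · -- covers
    rintro A ⟨l, f, hg, hfD, hsub, rfl⟩
    refine ⟨l, ?_⟩
    rintro v ⟨⟨j, hj⟩, hvE⟩
    have hninl : v ∉ Set.range (Sum.inl : Fin n → UVar σ n) := hvE.2
    have hv : v = enc a l (f.args j) := hj.symm
    by_cases hca : f.args j ∈ Set.range a
    · exfalso
      apply hninl
      rw [hv, enc, dif_pos hca]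
      exact ⟨_, rfl⟩
    · refine ⟨⟨hg, f.args j, ?_, hca, by rw [hv, enc_notmem hca]⟩, hvE⟩
      rcases hsub ⟨j, rfl⟩ with h | h
      · exact h
      · exact absurd h hca
  · -- conn
    intro y hy
    have hyninl : y ∉ Set.range (Sum.inl : Fin n → UVar σ n) := hy.2
    obtain ⟨A, hA, j, hj⟩ : ∃ A ∈ uAtoms D k a, ∃ j, A.args j = y := by
      have := hy.1
      simp only [adom, Set.mem_iUnion, Set.mem_range] at this
      obtain ⟨A, hA, j, hj⟩ := this
      exact ⟨A, hA, j, hj⟩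
    obtain ⟨l₀, f, hg₀, hfD, hsub, rfl⟩ := hA
    have hca : f.args j ∉ Set.range a := by
      intro hmem
      apply hyninl
      rw [← hj]
      show enc a l₀ (f.args j) ∈ _
      rw [enc, dif_pos hmem]
      exact ⟨_, rfl⟩
    set c := f.args j with hcdef
    have hy_eq : y = Sum.inr (repU l₀ c) := by
      rw [← hj]
      show enc a l₀ c = _
      exact enc_notmem hca
    have hcsetU : c ∈ setU l₀ := by
      rcases hsub ⟨j, rfl⟩ with h | h
      · exact h
      · exact absurd h hca
    have hchar : ∀ t : List (Finset (Atom σ ℕ)),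
        (y ∈ {v : UVar σ n | goodL D k t ∧
          ∃ c', c' ∈ setU t ∧ c' ∉ Set.range a ∧ v = Sum.inr (repU t c')} ∩
          (qStar D k a (σ := σ)).existVars) ↔
        (goodL D k t ∧ c ∈ setU t ∧ repU t c = repU l₀ c) := by
      intro t
      constructor
      · rintro ⟨⟨hgt, c', hc's, hc'a, hc'eq⟩, -⟩
        rw [hy_eq] at hc'eq
        have hrep : repU t c' = repU l₀ c := (Sum.inr.inj hc'eq).symm
        have hc'c : c' = c := by
          have h1 := repU_snd t c'
          rw [hrep, repU_snd] at h1
          exact h1.symm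
        rw [hc'c] at hc's hrep
        exact ⟨hgt, hc's, hrep⟩
      · rintro ⟨hgt, hcs, hrep⟩
        exact ⟨⟨hgt, c, hcs, hca, by rw [hy_eq, hrep]⟩, hy⟩
    have hsetexq : {t | y ∈ {v : UVar σ n | goodL D k t ∧
          ∃ c', c' ∈ setU t ∧ c' ∉ Set.range a ∧ v = Sum.inr (repU t c')} ∩
          (qStar D k a (σ := σ)).existVars} =
        {t : List (Finset (Atom σ ℕ)) | goodL D k t ∧ c ∈ setU t ∧ repU t c = repU l₀ c} :=
      Set.ext fun t => hchar t
    erw [hsetexq]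
    set N := {t : List (Finset (Atom σ ℕ)) | goodL D k t ∧ c ∈ setU t ∧ repU t c = repU l₀ c}
      with hN
    have hmN : (repU l₀ c).1 ∈ N := ⟨repU_fst_good hg₀, repU_fst_setU hcsetU, repU_idem hcsetU⟩
    have hreach : ∀ t (ht : t ∈ N), (SimpleGraph.induce N (consGraph _)).Reachable
        ⟨t, ht⟩ ⟨(repU l₀ c).1, hmN⟩ := by
      intro t
      induction t with
      | nil =>
        intro ht
        exact absurd ht.2.1 (by simp [setU])
      | cons S m ih =>
        intro ht
        have hgt : goodL D k (S :: m) := ht.1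
        have hrep : repU (S :: m) c = repU l₀ c := ht.2.2
        by_cases hcm : c ∈ setU m
        · have hrm : repU m c = repU l₀ c := by rw [← repU_cons_mem (S := S) hcm]; exact hrep
          have htm : m ∈ N := ⟨goodL_tail hgt, hcm, hrm⟩
          have hadj : (SimpleGraph.induce N (consGraph (Finset (Atom σ ℕ)))).Adj
              ⟨S :: m, ht⟩ ⟨m, htm⟩ := by
            show (consGraph (Finset (Atom σ ℕ))).Adj (S :: m) m
            exact consGraph_adj_cons S m
          exact hadj.reachable.trans (ih htm)
        · have h1 : repU (S :: m) c = (S :: m, c) := repU_cons_notmem hcm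
          have h2 : (repU l₀ c).1 = S :: m := by rw [← hrep, h1]
          have h3 : (⟨(repU l₀ c).1, hmN⟩ : ↥N) = ⟨S :: m, ht⟩ := Subtype.ext h2
          rw [h3]
    rw [SimpleGraph.connected_iff]
    refine ⟨fun x z => ?_, ⟨⟨l₀, ⟨hg₀, hcsetU, rfl⟩⟩⟩⟩
    exact (hreach x.1 x.2).trans (hreach z.1 z.2).symm
  · -- width
    intro t
    by_cases hg : goodL D k t
    · cases t with
      | nil =>
        refine ⟨∅, by simp, by simp, ?_⟩
        rintro v ⟨⟨-, c, hcs, -⟩, -⟩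
        simp [setU] at hcs
      | cons S m =>
        refine ⟨S.image (fun f => f.map (enc a (S :: m))), ?_, ?_, ?_⟩
        · rintro A hA
          simp only [Finset.coe_image, Set.mem_image] at hA
          obtain ⟨f, hf, rfl⟩ := hA
          refine ⟨S :: m, f, hg, (hg S (List.mem_cons_self)).1 hf, ?_, rfl⟩
          intro x hx
          left
          exact Set.mem_biUnion hf hx
        · exact le_trans Finset.card_image_le (hg S (List.mem_cons_self)).2
        · rintro v ⟨⟨-, c, hcs, hca, hveq⟩, -⟩
          have hcs' : ∃ f₀ ∈ (S : Set (Atom σ ℕ)), c ∈ Set.range f₀.args := by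
            simpa [setU] using hcs
          obtain ⟨f₀, hf₀, j, hj⟩ := hcs'
          simp only [Set.mem_iUnion]
          refine ⟨f₀.map (enc a (S :: m)), ?_, j, ?_⟩
          · simp only [Finset.coe_image, Set.mem_image]
            exact ⟨f₀, hf₀, rfl⟩
          · show enc a (S :: m) (f₀.args j) = v
            rw [hj, enc_notmem hca, hveq]
    · refine ⟨∅, by simp, by simp, ?_⟩
      rintro v ⟨⟨hgt, -⟩, -⟩
      exact absurd hgt hg

lemma empty_ghw (a : Fin n → ℕ) :
    (⟨ℕ, ∅, a, Set.countable_empty⟩ : CQI σ n).ghwLE k := by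
  refine ⟨⟨PUnit, ⊥, ⟨?_, ?_⟩, fun _ => ∅, fun t => Set.empty_subset _, ?_, ?_⟩, ?_⟩
  · rw [SimpleGraph.connected_iff]
    exact ⟨fun u v => by rw [Subsingleton.elim u v], ⟨PUnit.unit⟩⟩
  · intro v c hc
    cases c with
    | nil => exact hc.ne_nil rfl
    | cons h p => simp at h
  · rintro f hf
    exact absurd hf (Set.notMem_empty f)
  · intro y hy
    exfalso
    have := hy.1
    simp [adom] at this
  · intro t
    exact ⟨∅, by simp, by simp, by simp⟩

/-- The backward direction: preservation of all `GHW(k)^∞` queries yields a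
winning Duplicator strategy, via the unraveling `qStar`. -/
lemma backward (D D' : DB σ ℕ) (a : Fin n → ℕ) (b : Fin n → ℕ)
    (hall : ∀ q : CQI σ n, q.ghwLE k →
      HomTup q.atoms q.free D a → HomTup q.atoms q.free D' b) :
    PebbleWin k D a D' b := by
  classical
  obtain ⟨bh, -, bhF⟩ := hall ⟨ℕ, ∅, a, Set.countable_empty⟩ (empty_ghw a)
    ⟨id, fun f hf => absurd hf (Set.notMem_empty f), fun i => rfl⟩
  obtain ⟨h, hHom, hFree⟩ := hall (qStar D k a) (qStar_ghw D k a) (qStar_hom D k a)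
  have hFree' : ∀ i : Fin n, h (Sum.inl i) = b i := hFree
  have bhF' : ∀ i : Fin n, bh (a i) = b i := bhF
  refine ⟨{p | ∃ l, goodL D k l ∧ p.1 ⊆ setU l ∧ p.2 = fun c => h (enc a l c)},
    ⟨fun c => h (enc a [] c), ⟨[], goodL_nil, Set.empty_subset _, rfl⟩⟩, ?_, ?_, ?_⟩
  · -- kCovered and PartialOk
    rintro p ⟨l, hg, hsub, hfun⟩
    constructor
    · cases l with
      | nil => exact ⟨∅, by simp, by simp, by simpa [setU] using hsub⟩
      | cons S m =>
        exact ⟨S, (hg S (List.mem_cons_self)).1, (hg S (List.mem_cons_self)).2,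
          by simpa [setU] using hsub⟩
    · constructor
      · intro i
        have hc : a i ∈ Set.range a := ⟨i, rfl⟩
        rw [hfun]
        show h (enc a l (a i)) = b i
        rw [enc, dif_pos hc, hFree' hc.choose]
        rw [← bhF' hc.choose, ← bhF' i, hc.choose_spec]
      · intro f hfD hsubf
        have hA : f.map (enc a l) ∈ uAtoms D k a := by
          refine ⟨l, f, hg, hfD, ?_, rfl⟩
          intro x hx
          rcases hsubf hx with h1 | h1
          · exact Or.inl (hsub h1)
          · exact Or.inr h1
        have hmem := hHom _ hA
        have heq : f.map p.2 = (f.map (enc a l)).map h := by rw [hfun]; rfl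
        rw [heq]
        exact hmem
  · -- insert a pebble
    rintro p ⟨l, hg, hsub, hfun⟩ c ⟨S', hS'D, hS'c, hS'cov⟩
    refine ⟨(insert c p.1, fun c' => h (enc a (S' :: l) c')),
      ⟨S' :: l, ?_, ?_, rfl⟩, rfl, ?_⟩
    · intro T hT
      rcases List.mem_cons.mp hT with rfl | hT
      · exact ⟨hS'D, hS'c⟩
      · exact hg T hT
    · intro x hx
      have := hS'cov hx
      simpa [setU] using this
    · intro x hx
      rw [hfun]
      show h (enc a (S' :: l) x) = h (enc a l x)
      congr 1
      by_cases hxa : x ∈ Set.range a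
      · rw [enc, dif_pos hxa, enc, dif_pos hxa]
      · rw [enc_notmem hxa, enc_notmem hxa, repU_cons_mem (hsub hx)]
  · -- remove pebbles
    rintro p ⟨l, hg, hsub, hfun⟩ U hU
    exact ⟨(U, p.2), ⟨l, hg, hU.trans hsub, hfun⟩, rfl, fun x _ => rfl⟩

end Backward

end CQAux

/-- For countably infinite databases `D`, `D'`: `(D, a) →_k (D', b)` iff every
CQ in `GHW(k)^∞` mapping into `(D, a)` also maps into `(D', b)`. -/
theorem statement7 (σ : Schema) (k : ℕ) (hk : 1 ≤ k) (n : ℕ)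
    (D D' : DB σ ℕ) (hD : D.Countable) (hD' : D'.Countable)
    (a : Fin n → ℕ) (ha : ∀ i, a i ∈ adom D)
    (b : Fin n → ℕ) (hb : ∀ i, b i ∈ adom D') :
    PebbleWin k D a D' b ↔
      ∀ q : CQI σ n, q.ghwLE k →
        HomTup q.atoms q.free D a → HomTup q.atoms q.free D' b := by
  constructor
  · intro hwin q hq hhom
    exact CQAux.forward hwin q hq hhom
  · intro hall
    exact CQAux.backward D D' a b hall
end
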